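/- arXiv:2001.00134 — 5 statements merged into one kernel-verified Lean document; each statement's English description precedes it below -/
import Mathlib

section
/- Let Q be an irreducible regular Q-matrix on a countable set E with inf_{i∈E} q_i > 0, whose embedding chain Π is recurrent and whose Q-process is ergodic, and let H be a nonempty finite subset of E. Then the Q-process is not exponentially ergodic if and only if there exist a sequence of positive numbers λ_n ∈ (0, inf_{i∈E} q_i) and a sequence of functions y⁽ⁿ⁾ : E → ℝ (n ≥ 1) such that: (1) λ_n → 0 as n → ∞; (2) for each n, y⁽ⁿ⁾ is finitely supported and y⁽ⁿ⁾(i) ≤ (q_i/(q_i−λ_n))·Σ_{j∉H} Π(i,j)·y⁽ⁿ⁾(j) + 1/(q_i−λ_n) for every i ∈ E; and (3) sup_{n≥1} max_{i∈H} y⁽ⁿ⁾(i) = ∞. -/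
open scoped ENNReal NNReal BigOperators Classical Topology
open Filter Set

noncomputable section

/-- `q` is a Q-matrix: nonnegative off-diagonal entries, and for every state `i` the
off-diagonal row sums converge to `q_i := -q i i ∈ (0,∞)`. -/
structure IsQMatrix {E : Type*} (q : E → E → ℝ) : Prop where
  offdiag_nonneg : ∀ i j, i ≠ j → 0 ≤ q i j
  diag_neg : ∀ i, 0 < -q i i
  row_hasSum : ∀ i, HasSum (fun j => if j = i then 0 else q i j) (-q i i)

/-- Irreducibility: any two distinct states are joined by a finite chain of positive entries. -/
def MatIrreducible {E : Type*} (M : E → E → ℝ) : Prop :=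
  ∀ i j : E, i ≠ j → Relation.TransGen (fun a b => 0 < M a b) i j

/-- Regularity (non-explosiveness) of a Q-matrix. -/
def QRegular {E : Type*} (q : E → E → ℝ) : Prop :=
  ∃ lam : ℝ, 0 < lam ∧
    ∀ u : E → ℝ, (∀ i, 0 ≤ u i) → (∀ i, u i ≤ 1) →
      (∀ i, HasSum (fun j => q i j * u j) (lam * u i)) → ∀ i, u i = 0

/-- The embedding chain `Π(i,j) = q(i,j)/q_i` for `j ≠ i`, `Π(i,i) = 0`, as `ℝ≥0∞`. -/
def embed {E : Type*} (q : E → E → ℝ) (i j : E) : ℝ≥0∞ :=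
  if j = i then 0 else ENNReal.ofReal (q i j / (-q i i))

/-- `x` is the minimal nonnegative solution of the system `x i = ∑ j, A i j * x j + g i`. -/
def IsMinSol {ι : Type*} (A : ι → ι → ℝ≥0∞) (g : ι → ℝ≥0∞) (x : ι → ℝ≥0∞) : Prop :=
  (∀ i, x i = (∑' j, A i j * x j) + g i) ∧
    ∀ y : ι → ℝ≥0∞, (∀ i, y i = (∑' j, A i j * y j) + g i) → ∀ i, x i ≤ y i

/-- Recurrence of a stochastic `ℝ≥0∞`-matrix at a state `o`: the minimal nonnegative
solution of `u i = ∑_{j ≠ o} P i j * u j + P i o` (for `i ≠ o`) is identically 1. -/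
def RecurrentAt {E : Type*} (P : E → E → ℝ≥0∞) (o : E) : Prop :=
  ∀ u : {i : E // i ≠ o} → ℝ≥0∞,
    IsMinSol (fun i j : {i : E // i ≠ o} => P i.1 j.1) (fun i => P i.1 o) u → ∀ i, u i = 1

/-- Recurrence of a stochastic `ℝ≥0∞`-matrix (at some state). -/
def MatRecurrent {E : Type*} (P : E → E → ℝ≥0∞) : Prop := ∃ o : E, RecurrentAt P o

/-- `m l i = 𝔼_i σ_H ^ l`: the family of moments of the return time to `H`,
defined inductively via minimal nonnegative solutions. -/
def IsMomentSeq {E : Type*} (q : E → E → ℝ) (H : Set E) (m : ℕ → E → ℝ≥0∞) : Prop :=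
  (∀ i, m 0 i = 1) ∧
    ∀ l : ℕ,
      IsMinSol (fun i j => if j ∈ H then 0 else embed q i j)
        (fun i => (((l : ℝ≥0∞) + 1) / ENNReal.ofReal (-q i i)) * m l i) (m (l + 1))

/-- A stochastic matrix. -/
def IsStochastic {E : Type*} (P : E → E → ℝ) : Prop :=
  (∀ i j, 0 ≤ P i j) ∧ ∀ i, HasSum (P i) 1

/-- `n`-step transition "probabilities" of `P`, valued in `ℝ≥0∞`. -/
def nstepE {E : Type*} (P : E → E → ℝ) : ℕ → E → E → ℝ≥0∞
  | 0 => fun i j => if i = j then 1 else 0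
  | n + 1 => fun i j => ∑' k, nstepE P n i k * ENNReal.ofReal (P k j)

/-- Aperiodicity: every state has period 1 (the gcd of its positive return times is 1). -/
def MatAperiodic {E : Type*} (P : E → E → ℝ) : Prop :=
  ∀ i : E, ∀ d : ℕ, (∀ n : ℕ, 0 < n → 0 < nstepE P n i i → d ∣ n) → d = 1

/-- `sigmaDist P H n i = ℙ_i (σ_H = n + 1)`, where `σ_H = inf {n ≥ 1 : X n ∈ H}` is the
return time to `H` of the chain with transition matrix `P` started at `i`. -/
def sigmaDist {E : Type*} (P : E → E → ℝ) (H : Set E) : ℕ → E → ℝ≥0∞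
  | 0 => fun i => ∑' j, if j ∈ H then ENNReal.ofReal (P i j) else 0
  | n + 1 => fun i => ∑' j, if j ∈ H then 0 else ENNReal.ofReal (P i j) * sigmaDist P H n j

/-- Recurrence of the discrete-time chain: `ℙ_i (σ_H < ∞) = 1` for every `i`. -/
def DRecurrent {E : Type*} (P : E → E → ℝ) (H : Set E) : Prop :=
  ∀ i, (∑' n, sigmaDist P H n i) = 1

/-- `dMoment P H l i = 𝔼_i σ_H ^ l` (for a recurrent chain). -/
def dMoment {E : Type*} (P : E → E → ℝ) (H : Set E) (l : ℕ) (i : E) : ℝ≥0∞ :=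
  ∑' n : ℕ, ((n + 1 : ℕ) : ℝ≥0∞) ^ l * sigmaDist P H n i

/-- A single birth Q-matrix on ℕ. -/
def IsSingleBirth (q : ℕ → ℕ → ℝ) : Prop :=
  (∀ i, 0 < q i (i + 1)) ∧ ∀ i j, 2 ≤ j → q i (i + j) = 0

/-- `sbF q n i = F_n^{(i)}` of single birth theory. -/
def sbF (q : ℕ → ℕ → ℝ) : ℕ → ℕ → ℝ
  | n, i =>
    if i = n then 1
    else (1 / q n (n + 1)) *
      ∑ k ∈ (Finset.Ico i n).attach,
        (∑ j ∈ Finset.range (k.1 + 1), q n j) * sbF q k.1 i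
  termination_by n i => n
  decreasing_by exact (Finset.mem_Ico.mp k.2).2

/-- `sbd q n = d_n` of single birth theory. -/
def sbd (q : ℕ → ℕ → ℝ) : ℕ → ℝ
  | 0 => 0
  | n + 1 =>
    (1 / q (n + 1) (n + 2)) *
      (1 + ∑ k ∈ (Finset.range (n + 1)).attach,
        (∑ j ∈ Finset.range (k.1 + 1), q (n + 1) j) * sbd q k.1)
  termination_by n => n
  decreasing_by exact Finset.mem_range.mp k.2

/-- `d = sup_k (∑_{n=0}^k d_n) / (∑_{n=0}^k F_n^{(0)})`, valued in `ℝ≥0∞`. -/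
def sbdConst (q : ℕ → ℕ → ℝ) : ℝ≥0∞ :=
  ⨆ k : ℕ, ENNReal.ofReal
    ((∑ n ∈ Finset.range (k + 1), sbd q n) / (∑ n ∈ Finset.range (k + 1), sbF q n 0))

/-- Solutions of the truncated single-birth system
`x i = ∑_{1 ≤ j ≤ N, j ≠ i} (q i j / q_i) x j + 1 / q_i` for `1 ≤ i ≤ N`. -/
def sbTruncSol (q : ℕ → ℕ → ℝ) (N : ℕ) (x : ℕ → ℝ) : Prop :=
  ∀ i, 1 ≤ i → i ≤ N →
    x i = (∑ j ∈ Finset.Icc 1 N, if j = i then 0 else (q i j / (-q i i)) * x j) + 1 / (-q i i)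

/-- The Q-matrix with `q(i, i+1) = i+1` and `q(i, 0) = α_i` (for `i ≥ 1`). -/
def catQ (a : ℕ → ℝ) : ℕ → ℕ → ℝ := fun i j =>
  if j = i + 1 then (i + 1 : ℝ)
  else if j = 0 ∧ 1 ≤ i then a i
  else if j = i then -((i + 1 : ℝ) + if 1 ≤ i then a i else 0)
  else 0

/-- `α_i = (log i)^{-γ}` for `i ≥ 3`, `α_1 = α_2 = 0`. -/
def logAlpha (γ : ℝ) : ℕ → ℝ := fun i => if 3 ≤ i then Real.log i ^ (-γ) else 0

/-- The stochastic matrix with `P(i, i+1) = p_i` and `P(i, 0) = 1 - p_i`. -/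
def birthP (p : ℕ → ℝ) : ℕ → ℕ → ℝ := fun i j =>
  if j = i + 1 then p i else if j = 0 then 1 - p i else 0

section NEEAux

variable {E : Type*}

private lemma nee_tsum_iSup_mono {f : ℕ → E → ℝ≥0∞} (hf : Monotone f) :
    ∑' j, ⨆ n, f n j = ⨆ n, ∑' j, f n j := by
  refine le_antisymm ?_ (iSup_le fun n => ENNReal.tsum_le_tsum fun j => le_iSup (fun n => f n j) n)
  rw [ENNReal.tsum_eq_iSup_sum]
  refine iSup_le fun s => ?_
  rw [ENNReal.finsetSum_iSup_of_monotone (fun j (a b : ℕ) hab => hf hab j)]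
  exact iSup_mono fun n => ENNReal.sum_le_tsum s

variable (q : E → E → ℝ) (H : Set E)

private def Amat (lam : ℝ) : E → E → ℝ≥0∞ := fun i j =>
  if j ∈ H then 0 else ENNReal.ofReal ((-q i i) / (-q i i - lam)) * embed q i j

private def gvec (lam : ℝ) : E → ℝ≥0∞ := fun i => ENNReal.ofReal (1 / (-q i i - lam))

private def Lop (lam : ℝ) (x : E → ℝ≥0∞) : E → ℝ≥0∞ := fun i => ∑' j, Amat q H lam i j * x j

private def Fop (lam : ℝ) (x : E → ℝ≥0∞) : E → ℝ≥0∞ := fun i =>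
  Lop q H lam x i + gvec q lam i

/-- The candidate minimal solution: supremum of the iterates of `Fop` from `0`. -/
private def esol (lam : ℝ) : E → ℝ≥0∞ := fun i => ⨆ k, (Fop q H lam)^[k] 0 i

variable {q H}

private lemma embed_ne_top (i j : E) : embed q i j ≠ ⊤ := by
  unfold embed; split <;> simp

private lemma Amat_ne_top {lam : ℝ} (i j : E) : Amat q H lam i j ≠ ⊤ := by
  unfold Amat; split
  · simp
  · exact ENNReal.mul_ne_top ENNReal.ofReal_ne_top (embed_ne_top i j)

private lemma Lop_mono {lam : ℝ} {x y : E → ℝ≥0∞} (h : ∀ j, x j ≤ y j) (i : E) :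
    Lop q H lam x i ≤ Lop q H lam y i :=
  ENNReal.tsum_le_tsum fun j => mul_le_mul_right (h j) _

private lemma Fop_mono {lam : ℝ} {x y : E → ℝ≥0∞} (h : ∀ j, x j ≤ y j) (i : E) :
    Fop q H lam x i ≤ Fop q H lam y i :=
  add_le_add_left (Lop_mono h i) _

private lemma Fop_iter_mono {lam : ℝ} : ∀ k, ∀ i : E,
    (Fop q H lam)^[k] 0 i ≤ (Fop q H lam)^[k + 1] 0 i := by
  intro k
  induction k with
  | zero => intro i; exact zero_le
  | succ k ih =>
    intro i
    rw [Function.iterate_succ_apply', Function.iterate_succ_apply']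
    exact Fop_mono (fun j => ih j) i

private lemma Fop_iter_mono' {lam : ℝ} {k k' : ℕ} (h : k ≤ k') (i : E) :
    (Fop q H lam)^[k] 0 i ≤ (Fop q H lam)^[k'] 0 i := by
  induction k' with
  | zero => exact Nat.le_zero.mp h ▸ le_rfl
  | succ k' ih =>
    rcases Nat.lt_or_ge k (k' + 1) with h' | h'
    · exact le_trans (ih (by omega)) (Fop_iter_mono k' i)
    · have : k = k' + 1 := by omega
      subst this; exact le_rfl

private lemma Lop_iSup {lam : ℝ} {x : ℕ → E → ℝ≥0∞} (hx : Monotone x) (i : E) :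
    Lop q H lam (fun j => ⨆ n, x n j) i = ⨆ n, Lop q H lam (x n) i := by
  unfold Lop
  simp_rw [ENNReal.mul_iSup]
  exact nee_tsum_iSup_mono fun a b hab j => mul_le_mul_right (hx hab j) _

private lemma esol_eq (lam : ℝ) (i : E) :
    esol q H lam i = Lop q H lam (esol q H lam) i + gvec q lam i := by
  have hmono : Monotone fun k => ((Fop q H lam)^[k] (0 : E → ℝ≥0∞)) := by
    refine monotone_nat_of_le_succ fun k j => Fop_iter_mono k j
  have h1 : Lop q H lam (esol q H lam) i + gvec q lam i
      = ⨆ k, (Fop q H lam)^[k + 1] 0 i := by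
    rw [show esol q H lam = fun j => ⨆ k, (Fop q H lam)^[k] 0 j from rfl,
      Lop_iSup hmono, ENNReal.iSup_add]
    refine iSup_congr fun k => ?_
    rw [Function.iterate_succ_apply']
    rfl
  rw [h1]
  refine le_antisymm ?_ ?_
  · exact iSup_mono fun k => Fop_iter_mono k i
  · exact iSup_le fun k => le_iSup (fun k => (Fop q H lam)^[k] 0 i) (k + 1)

private lemma esol_min (lam : ℝ) {y : E → ℝ≥0∞}
    (hy : ∀ i, y i = Lop q H lam y i + gvec q lam i) (i : E) : esol q H lam i ≤ y i := by
  refine iSup_le fun k => ?_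
  induction k generalizing i with
  | zero => exact zero_le
  | succ k ih =>
    rw [Function.iterate_succ_apply', hy i]
    exact add_le_add_left (Lop_mono (fun j => ih j) i) _

private lemma esol_isMinSol (lam : ℝ) :
    IsMinSol (Amat q H lam) (gvec q lam) (esol q H lam) :=
  ⟨fun i => esol_eq lam i, fun y hy i => esol_min lam (fun i => hy i) i⟩

private def ecoeHom : ℝ≥0∞ →+ EReal :=
  ⟨⟨((↑) : ℝ≥0∞ → EReal), EReal.coe_ennreal_zero⟩, EReal.coe_ennreal_add⟩

private lemma ecoe_sum {s : Finset E} (F : E → ℝ≥0∞) :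
    ((∑ j ∈ s, F j : ℝ≥0∞) : EReal) = ∑ j ∈ s, ((F j : ℝ≥0∞) : EReal) :=
  map_sum ecoeHom F s

private lemma coe_real_le_coe_ofReal (a : ℝ) :
    (a : EReal) ≤ ((ENNReal.ofReal a : ℝ≥0∞) : EReal) := by
  rw [EReal.coe_ennreal_ofReal]
  exact EReal.coe_le_coe_iff.2 (le_max_left _ _)

private lemma coe_ennreal_ofReal_eq {a : ℝ} (ha : 0 ≤ a) :
    ((ENNReal.ofReal a : ℝ≥0∞) : EReal) = (a : EReal) := by
  rw [EReal.coe_ennreal_ofReal, max_eq_left ha]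

private lemma ecoe_toReal {z : ℝ≥0∞} (hz : z ≠ ⊤) : ((z.toReal : ℝ) : EReal) = (z : EReal) := by
  have h := EReal.coe_toReal (x := (z : EReal))
    (by simpa [EReal.coe_ennreal_eq_top_iff] using hz) (EReal.coe_ennreal_ne_bot z)
  rwa [EReal.toReal_coe_ennreal] at h

private lemma ofReal_le_of_ecoe_le {a : ℝ} {z : ℝ≥0∞} (h : (a : EReal) ≤ (z : EReal)) :
    ENNReal.ofReal a ≤ z := by
  rcases eq_or_ne z ⊤ with rfl | hz
  · exact le_top
  · have h2 : a ≤ z.toReal := EReal.coe_le_coe_iff.1 (h.trans_eq (ecoe_toReal hz).symm)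
    calc ENNReal.ofReal a ≤ ENNReal.ofReal z.toReal := ENNReal.ofReal_le_ofReal h2
    _ = z := ENNReal.ofReal_toReal hz

private lemma ereal_rhs_le (hq : IsQMatrix q) {lam : ℝ} (hlam : ∀ i, lam < -q i i)
    {y : E → ℝ} (hsupp : (Function.support y).Finite) (i : E) :
    (((-q i i) / (-q i i - lam) : ℝ) : EReal) *
        (∑' j : E, if j ∈ H then 0 else (embed q i j : EReal) * (y j : EReal))
        + ((1 / (-q i i - lam) : ℝ) : EReal)
      ≤ ((Lop q H lam (fun j => ENNReal.ofReal (y j)) i + gvec q lam i : ℝ≥0∞) : EReal) := by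
  have hd : (0:ℝ) < -q i i - lam := sub_pos.2 (hlam i)
  have hc : (0:ℝ) ≤ (-q i i) / (-q i i - lam) := div_nonneg (hq.diag_neg i).le hd.le
  have hd0 : (0:ℝ) ≤ 1 / (-q i i - lam) := by positivity
  set s : Finset E := hsupp.toFinset with hs
  have hmem : ∀ j, j ∉ s → y j = 0 := fun j hj => by
    by_contra h
    exact hj (hsupp.mem_toFinset.2 h)
  set F : E → ℝ≥0∞ := fun j => if j ∈ H then 0 else embed q i j * ENNReal.ofReal (y j) with hF
  have hT : (∑' j : E, if j ∈ H then 0 else (embed q i j : EReal) * (y j : EReal))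
      = ∑ j ∈ s, if j ∈ H then 0 else (embed q i j : EReal) * (y j : EReal) := by
    refine tsum_eq_sum fun j hj => ?_
    rw [hmem j hj]; simp
  have hS : (∑' j : E, F j) = ∑ j ∈ s, F j := by
    refine tsum_eq_sum fun j hj => ?_
    simp [hF, hmem j hj]
  have hTS : (∑' j : E, if j ∈ H then 0 else (embed q i j : EReal) * (y j : EReal))
      ≤ ((∑' j : E, F j : ℝ≥0∞) : EReal) := by
    rw [hT, hS, ecoe_sum]
    refine Finset.sum_le_sum fun j _ => ?_
    by_cases hjH : j ∈ H
    · simp [hF, hjH]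
    · simp only [hF, hjH, if_false]
      rw [EReal.coe_ennreal_mul]
      exact mul_le_mul_of_nonneg_left (coe_real_le_coe_ofReal (y j))
        (EReal.coe_ennreal_nonneg _)
  have hLp : Lop q H lam (fun j => ENNReal.ofReal (y j)) i
      = ENNReal.ofReal ((-q i i) / (-q i i - lam)) * ∑' j, F j := by
    rw [← ENNReal.tsum_mul_left]
    refine tsum_congr fun j => ?_
    by_cases hjH : j ∈ H
    · simp [Lop, Amat, hF, hjH]
    · simp [Lop, Amat, hF, hjH, mul_assoc]
  refine le_trans (add_le_add_left
    (mul_le_mul_of_nonneg_left hTS (EReal.coe_nonneg.2 hc)) _) (le_of_eq ?_)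
  rw [hLp, EReal.coe_ennreal_add, EReal.coe_ennreal_mul, coe_ennreal_ofReal_eq hc,
    show ((gvec q lam i : ℝ≥0∞) : EReal) = ((1 / (-q i i - lam) : ℝ) : EReal) from
      coe_ennreal_ofReal_eq hd0]

private lemma ereal_rhs_eq (hq : IsQMatrix q) {lam : ℝ} (hlam : ∀ i, lam < -q i i)
    {x : E → ℝ≥0∞} (hfin : ∀ j, x j ≠ ⊤) (hsupp : (Function.support x).Finite) (i : E) :
    (((-q i i) / (-q i i - lam) : ℝ) : EReal) *
        (∑' j : E, if j ∈ H then 0 else (embed q i j : EReal) * (((x j).toReal : ℝ) : EReal))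
        + ((1 / (-q i i - lam) : ℝ) : EReal)
      = ((Lop q H lam x i + gvec q lam i : ℝ≥0∞) : EReal) := by
  have hd : (0:ℝ) < -q i i - lam := sub_pos.2 (hlam i)
  have hc : (0:ℝ) ≤ (-q i i) / (-q i i - lam) := div_nonneg (hq.diag_neg i).le hd.le
  have hd0 : (0:ℝ) ≤ 1 / (-q i i - lam) := by positivity
  set s : Finset E := hsupp.toFinset with hs
  have hmem : ∀ j, j ∉ s → x j = 0 := fun j hj => by
    by_contra h
    exact hj (hsupp.mem_toFinset.2 h)
  set F : E → ℝ≥0∞ := fun j => if j ∈ H then 0 else embed q i j * x j with hF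
  have hT : (∑' j : E, if j ∈ H then 0 else (embed q i j : EReal) * (((x j).toReal : ℝ) : EReal))
      = ((∑' j : E, F j : ℝ≥0∞) : EReal) := by
    have h1 : (∑' j : E, F j) = ∑ j ∈ s, F j := by
      refine tsum_eq_sum fun j hj => ?_
      simp [hF, hmem j hj]
    have h2 : (∑' j : E, if j ∈ H then 0 else (embed q i j : EReal) *
        (((x j).toReal : ℝ) : EReal)) = ∑ j ∈ s,
          (if j ∈ H then 0 else (embed q i j : EReal) * (((x j).toReal : ℝ) : EReal)) := by
      refine tsum_eq_sum fun j hj => ?_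
      rw [hmem j hj]; simp
    rw [h1, h2, ecoe_sum]
    refine Finset.sum_congr rfl fun j _ => ?_
    by_cases hjH : j ∈ H
    · simp [hF, hjH]
    · simp only [hF, hjH, if_false]
      rw [EReal.coe_ennreal_mul, ecoe_toReal (hfin j)]
  have hLp : Lop q H lam x i
      = ENNReal.ofReal ((-q i i) / (-q i i - lam)) * ∑' j, F j := by
    rw [← ENNReal.tsum_mul_left]
    refine tsum_congr fun j => ?_
    by_cases hjH : j ∈ H
    · simp [Lop, Amat, hF, hjH]
    · simp [Lop, Amat, hF, hjH, mul_assoc]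
  rw [hT, hLp, EReal.coe_ennreal_add, EReal.coe_ennreal_mul, coe_ennreal_ofReal_eq hc,
    show ((gvec q lam i : ℝ≥0∞) : EReal) = ((1 / (-q i i - lam) : ℝ) : EReal) from
      coe_ennreal_ofReal_eq hd0]

private lemma Lop_add {lam : ℝ} (x z : E → ℝ≥0∞) (i : E) :
    Lop q H lam (fun j => x j + z j) i = Lop q H lam x i + Lop q H lam z i := by
  unfold Lop
  rw [← ENNReal.tsum_add]
  exact tsum_congr fun j => mul_add _ _ _

private lemma Lop_smul {lam : ℝ} (C : ℝ≥0∞) (x : E → ℝ≥0∞) (i : E) :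
    Lop q H lam (fun j => C * x j) i = C * Lop q H lam x i := by
  unfold Lop
  rw [← ENNReal.tsum_mul_left]
  exact tsum_congr fun j => mul_left_comm _ _ _

private lemma Lop_finsum {lam : ℝ} {ι : Type} (s : Finset ι) (v : ι → E → ℝ≥0∞) (i : E) :
    Lop q H lam (fun j => ∑ k ∈ s, v k j) i = ∑ k ∈ s, Lop q H lam (v k) i := by
  unfold Lop
  simp_rw [Finset.mul_sum]
  exact Summable.tsum_finsetSum fun _ _ => ENNReal.summable

private lemma Fop_iter_eq_sum (lam : ℝ) : ∀ K, ((Fop q H lam)^[K] 0 : E → ℝ≥0∞)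
    = fun i => ∑ k ∈ Finset.range K, (Lop q H lam)^[k] (gvec q lam) i := by
  intro K
  induction K with
  | zero => funext i; simp
  | succ K ih =>
    funext i
    rw [Function.iterate_succ_apply', ih]
    show Lop q H lam (fun j => ∑ k ∈ Finset.range K, (Lop q H lam)^[k] (gvec q lam) j) i
        + gvec q lam i = _
    rw [Lop_finsum, Finset.sum_range_succ' (fun k => (Lop q H lam)^[k] (gvec q lam) i)]
    congr 1
    refine Finset.sum_congr rfl fun k _ => ?_
    rw [Function.iterate_succ_apply']

private lemma Lop_iter_le_smul {lam : ℝ} {C : ℝ≥0∞} {yp g0 : E → ℝ≥0∞}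
    (hyp : ∀ j, yp j ≤ C * g0 j) :
    ∀ k, ∀ i : E, (Lop q H lam)^[k] yp i ≤ C * (Lop q H lam)^[k] g0 i := by
  intro k
  induction k with
  | zero => exact hyp
  | succ k ih =>
    intro i
    rw [Function.iterate_succ_apply', Function.iterate_succ_apply']
    calc Lop q H lam ((Lop q H lam)^[k] yp) i
        ≤ Lop q H lam (fun j => C * (Lop q H lam)^[k] g0 j) i := Lop_mono ih i
      _ = C * Lop q H lam ((Lop q H lam)^[k] g0) i := Lop_smul C _ i

private lemma sub_le_estar (hq : IsQMatrix q) {lam lamstar : ℝ}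
    (hll : lam ≤ lamstar) (hlams : ∀ i, lamstar < -q i i)
    {estar : E → ℝ≥0∞}
    (hstar : ∀ i, estar i = (∑' j, Amat q H lamstar i j * estar j) + gvec q lamstar i)
    (hfin : ∀ i, estar i ≠ ⊤)
    {y : E → ℝ} (hsupp : (Function.support y).Finite)
    (hy : ∀ i : E, (y i : EReal) ≤ (((-q i i) / (-q i i - lam) : ℝ) : EReal) *
        (∑' j : E, if j ∈ H then 0 else (embed q i j : EReal) * (y j : EReal))
        + ((1 / (-q i i - lam) : ℝ) : EReal)) :
    ∀ i, y i ≤ (estar i).toReal := by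
  have hlam : ∀ i, lam < -q i i := fun i => lt_of_le_of_lt hll (hlams i)
  set yp : E → ℝ≥0∞ := fun j => ENNReal.ofReal (y j) with hyp_def
  -- Step A
  have stepA : ∀ i : E, (y i : EReal) ≤ ((Lop q H lam yp i + gvec q lam i : ℝ≥0∞) : EReal) :=
    fun i => (hy i).trans (ereal_rhs_le hq hlam hsupp i)
  -- Step B
  have stepB : ∀ k, ∀ i : E, (y i : EReal)
      ≤ (((Fop q H lam)^[k] 0 i + (Lop q H lam)^[k] yp i : ℝ≥0∞) : EReal) := by
    intro k
    induction k with
    | zero =>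
      intro i
      rw [Function.iterate_zero, Function.iterate_zero, id_eq, id_eq, Pi.zero_apply, zero_add]
      exact coe_real_le_coe_ofReal (y i)
    | succ k ih =>
      intro i
      have hyple : ∀ j, yp j ≤ (Fop q H lam)^[k] 0 j + (Lop q H lam)^[k] yp j :=
        fun j => ofReal_le_of_ecoe_le (ih j)
      refine (stepA i).trans (EReal.coe_ennreal_le_coe_ennreal_iff.2 ?_)
      calc Lop q H lam yp i + gvec q lam i
          ≤ Lop q H lam (fun j => (Fop q H lam)^[k] 0 j + (Lop q H lam)^[k] yp j) i
              + gvec q lam i := add_le_add_left (Lop_mono hyple i) _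
        _ = (Lop q H lam ((Fop q H lam)^[k] 0) i + gvec q lam i)
              + Lop q H lam ((Lop q H lam)^[k] yp) i := by
            rw [Lop_add]; ring
        _ = (Fop q H lam)^[k + 1] 0 i + (Lop q H lam)^[k + 1] yp i := by
            rw [Function.iterate_succ_apply', Function.iterate_succ_apply']
            rfl
  -- Step C : a constant bound
  have hgne0 : ∀ j : E, gvec q lam j ≠ 0 := fun j => by
    have h1 : (0:ℝ) < 1 / (-q j j - lam) := one_div_pos.2 (sub_pos.2 (hlam j))
    exact ne_of_gt (ENNReal.ofReal_pos.2 h1)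
  set s : Finset E := hsupp.toFinset with hs
  set C : ℝ≥0∞ := ∑ j ∈ s, ENNReal.ofReal (y j) * (gvec q lam j)⁻¹ with hC
  have hCtop : C ≠ ⊤ := by
    rw [hC, ENNReal.sum_ne_top]
    intro a _
    exact ENNReal.mul_ne_top ENNReal.ofReal_ne_top (ENNReal.inv_ne_top.2 (hgne0 a))
  have hypC : ∀ j, yp j ≤ C * gvec q lam j := by
    intro j
    by_cases hj : j ∈ s
    · have h1 : ENNReal.ofReal (y j) * (gvec q lam j)⁻¹ ≤ C :=
        Finset.single_le_sum (f := fun j => ENNReal.ofReal (y j) * (gvec q lam j)⁻¹)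
          (fun _ _ => zero_le) hj
      calc yp j = ENNReal.ofReal (y j) * (gvec q lam j)⁻¹ * gvec q lam j := by
            rw [mul_assoc, ENNReal.inv_mul_cancel (hgne0 j) ENNReal.ofReal_ne_top, mul_one]
        _ ≤ C * gvec q lam j := mul_le_mul_left h1 _
    · have : y j = 0 := by
        by_contra h
        exact hj (hsupp.mem_toFinset.2 h)
      simp [hyp_def, this]
  -- Step E : iterates are below estar
  have stepE : ∀ k, ∀ i : E, (Fop q H lam)^[k] 0 i ≤ estar i := by
    intro k
    induction k with
    | zero => intro i; exact zero_le
    | succ k ih =>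
      intro i
      rw [Function.iterate_succ_apply', hstar i]
      refine add_le_add ?_ ?_
      · refine ENNReal.tsum_le_tsum fun j => ?_
        refine mul_le_mul' ?_ (ih j)
        unfold Amat
        by_cases hjH : j ∈ H
        · simp [hjH]
        · simp only [hjH, if_false]
          refine mul_le_mul_left (ENNReal.ofReal_le_ofReal ?_) _
          exact div_le_div_of_nonneg_left (hq.diag_neg i).le (sub_pos.2 (hlams i))
            (by linarith)
      · exact ENNReal.ofReal_le_ofReal (by
          have h1 : (0:ℝ) < -q i i - lamstar := sub_pos.2 (hlams i)
          exact one_div_le_one_div_of_le h1 (by linarith))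
  -- Step F : the series of Lop-iterates of gvec converges
  have hsum : ∀ i : E, (∑' k : ℕ, (Lop q H lam)^[k] (gvec q lam) i) ≤ estar i := by
    intro i
    rw [ENNReal.tsum_eq_iSup_nat]
    refine iSup_le fun K => ?_
    have := Fop_iter_eq_sum (q := q) (H := H) lam K
    calc (∑ k ∈ Finset.range K, (Lop q H lam)^[k] (gvec q lam) i)
        = (Fop q H lam)^[K] 0 i := by rw [this]
      _ ≤ estar i := stepE K i
  have htend : ∀ i : E, Tendsto (fun k => (Lop q H lam)^[k] (gvec q lam) i) atTop (𝓝 0) :=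
    fun i => ENNReal.tendsto_atTop_zero_of_tsum_ne_top (ne_top_of_le_ne_top (hfin i) (hsum i))
  -- conclusion
  intro i
  by_contra hcon
  push_neg at hcon
  set ε : ℝ := (y i - (estar i).toReal) / 2 with hε
  have hεpos : 0 < ε := by
    simp only [hε]; linarith
  have htend2 : Tendsto (fun k => C * (Lop q H lam)^[k] (gvec q lam) i) atTop (𝓝 0) := by
    have := ENNReal.Tendsto.const_mul (a := C) (htend i) (Or.inr hCtop)
    simpa using this
  obtain ⟨k, hk⟩ := (htend2.eventually_lt_const (ENNReal.ofReal_pos.2 hεpos)).exists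
  have h1 : (y i : EReal) ≤ ((estar i + ENNReal.ofReal ε : ℝ≥0∞) : EReal) := by
    refine (stepB k i).trans (EReal.coe_ennreal_le_coe_ennreal_iff.2 ?_)
    refine add_le_add (stepE k i) ?_
    exact le_trans (Lop_iter_le_smul hypC k i) hk.le
  have h2 : ((estar i + ENNReal.ofReal ε : ℝ≥0∞) : EReal)
      = (((estar i).toReal + ε : ℝ) : EReal) := by
    rw [EReal.coe_ennreal_add, ← ecoe_toReal (hfin i), coe_ennreal_ofReal_eq hεpos.le,
      ← EReal.coe_add]
  rw [h2] at h1
  have := EReal.coe_le_coe_iff.1 h1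
  simp only [hε] at this
  linarith

private lemma esol_top_step (hq : IsQMatrix q) {lam : ℝ} (hlam : ∀ i, lam < -q i i)
    {i j : E} (hij : 0 < q i j) (hjH : j ∉ H) (hj : esol q H lam j = ⊤) :
    esol q H lam i = ⊤ := by
  have hji : j ≠ i := by
    intro h; subst h
    have := hq.diag_neg j
    linarith
  have hA : Amat q H lam i j ≠ 0 := by
    unfold Amat embed
    rw [if_neg hjH, if_neg hji]
    refine mul_ne_zero ?_ ?_
    · exact ne_of_gt (ENNReal.ofReal_pos.2 (div_pos (hq.diag_neg i) (sub_pos.2 (hlam i))))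
    · exact ne_of_gt (ENNReal.ofReal_pos.2 (div_pos hij (hq.diag_neg i)))
  have h1 : Amat q H lam i j * esol q H lam j ≤ esol q H lam i := by
    rw [esol_eq lam i]
    exact le_add_right (ENNReal.le_tsum j)
  rw [hj, ENNReal.mul_top hA] at h1
  exact top_le_iff.1 h1

private lemma exists_top_in_H (hq : IsQMatrix q) (hirr : MatIrreducible q) {lam : ℝ}
    (hlam : ∀ i, lam < -q i i) (hHne : H.Nonempty)
    {jstar : E} (hj : esol q H lam jstar = ⊤) :
    ∃ h ∈ H, esol q H lam h = ⊤ := by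
  by_cases hjH : jstar ∈ H
  · exact ⟨jstar, hjH, hj⟩
  obtain ⟨h0, h0H⟩ := hHne
  have hne : h0 ≠ jstar := fun h => hjH (h ▸ h0H)
  have hpath := hirr h0 jstar hne
  have key : ∀ a : E, Relation.TransGen (fun a b => 0 < q a b) a jstar →
      esol q H lam a = ⊤ ∨ ∃ h ∈ H, esol q H lam h = ⊤ := by
    intro a h
    refine Relation.TransGen.head_induction_on h ?_ ?_
    · intro a hr
      exact Or.inl (esol_top_step hq hlam hr hjH hj)
    · intro a c hr _ ihp
      rcases ihp with hc | hc
      · by_cases hcH : c ∈ H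
        · exact Or.inr ⟨c, hcH, hc⟩
        · exact Or.inl (esol_top_step hq hlam hr hcH hc)
      · exact Or.inr hc
  rcases key h0 hpath with hc | hc
  · exact ⟨h0, h0H, hc⟩
  · exact hc

variable (q H)

/-- Truncated operator: sums restricted to the finite set `{j | f j < m}`. -/
private def Tm (f : E → ℕ) (lam : ℝ) (m : ℕ) (x : E → ℝ≥0∞) : E → ℝ≥0∞ := fun i =>
  if f i < m then (∑' j, if f j < m then Amat q H lam i j * x j else 0) + gvec q lam i
  else 0

variable {q H}

private lemma Tm_apply {f : E → ℕ} {lam : ℝ} {m : ℕ} (x : E → ℝ≥0∞) (i : E) :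
    Tm q H f lam m x i
      = if f i < m then (∑' j, if f j < m then Amat q H lam i j * x j else 0) + gvec q lam i
        else 0 := rfl

private lemma Tm_mono {f : E → ℕ} {lam : ℝ} {m m' : ℕ} (hmm' : m ≤ m') {x x' : E → ℝ≥0∞}
    (hxx' : ∀ j, x j ≤ x' j) (i : E) : Tm q H f lam m x i ≤ Tm q H f lam m' x' i := by
  unfold Tm
  by_cases h : f i < m
  · rw [if_pos h, if_pos (lt_of_lt_of_le h hmm')]
    refine add_le_add_left (ENNReal.tsum_le_tsum fun j => ?_) _
    by_cases hj : f j < m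
    · rw [if_pos hj, if_pos (lt_of_lt_of_le hj hmm')]
      exact mul_le_mul_right (hxx' j) _
    · rw [if_neg hj]; exact zero_le
  · rw [if_neg h]; exact zero_le

private lemma Tm_iter_supp {f : E → ℕ} {lam : ℝ} {m : ℕ} :
    ∀ k, ∀ i : E, ¬ f i < m → (Tm q H f lam m)^[k] 0 i = 0 := by
  intro k i hi
  cases k with
  | zero => rfl
  | succ k =>
    rw [Function.iterate_succ_apply']
    exact if_neg hi

private lemma Tm_iter_mono_k {f : E → ℕ} {lam : ℝ} {m : ℕ} :
    ∀ k, ∀ i : E, (Tm q H f lam m)^[k] 0 i ≤ (Tm q H f lam m)^[k + 1] 0 i := by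
  intro k
  induction k with
  | zero => intro i; exact zero_le
  | succ k ih =>
    intro i
    rw [Function.iterate_succ_apply', Function.iterate_succ_apply' (n := k + 1)]
    exact Tm_mono le_rfl (fun j => ih j) i

private lemma Tm_iter_mono_m {f : E → ℕ} {lam : ℝ} {m m' : ℕ} (hmm' : m ≤ m') :
    ∀ k, ∀ i : E, (Tm q H f lam m)^[k] 0 i ≤ (Tm q H f lam m')^[k] 0 i := by
  intro k
  induction k with
  | zero => intro i; exact le_rfl
  | succ k ih =>
    intro i
    rw [Function.iterate_succ_apply', Function.iterate_succ_apply']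
    exact Tm_mono hmm' (fun j => ih j) i

private lemma Tm_iter_ne_top {f : E → ℕ} (hf : Function.Injective f) {lam : ℝ} {m : ℕ} :
    ∀ k, ∀ i : E, (Tm q H f lam m)^[k] 0 i ≠ ⊤ := by
  have hEm : ({ j : E | f j < m}).Finite :=
    Set.Finite.preimage hf.injOn (Set.finite_Iio m)
  intro k
  induction k with
  | zero => intro i; exact ENNReal.zero_ne_top
  | succ k ih =>
    intro i
    rw [Function.iterate_succ_apply', Tm_apply]
    by_cases h : f i < m
    · rw [if_pos h]
      refine ENNReal.add_ne_top.2 ⟨?_, ENNReal.ofReal_ne_top⟩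
      have hsum : (∑' j, if f j < m then Amat q H lam i j * (Tm q H f lam m)^[k] 0 j else 0)
          = ∑ j ∈ hEm.toFinset,
            (if f j < m then Amat q H lam i j * (Tm q H f lam m)^[k] 0 j else 0) := by
        refine tsum_eq_sum fun j hj => ?_
        rw [if_neg (by simpa using (hEm.mem_toFinset.not.1 hj))]
      rw [hsum, ENNReal.sum_ne_top]
      intro j _
      split
      · exact ENNReal.mul_ne_top (Amat_ne_top i j) (ih j)
      · exact ENNReal.zero_ne_top
    · rw [if_neg h]; exact ENNReal.zero_ne_top

private lemma Tm_iter_subsol {f : E → ℕ} {lam : ℝ} {m : ℕ} :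
    ∀ k, ∀ i : E, (Tm q H f lam m)^[k] 0 i
      ≤ Lop q H lam ((Tm q H f lam m)^[k] 0) i + gvec q lam i := by
  intro k
  cases k with
  | zero => intro i; exact zero_le
  | succ k =>
    intro i
    rw [Function.iterate_succ_apply', Tm_apply]
    by_cases h : f i < m
    · rw [if_pos h]
      refine add_le_add_left ?_ _
      refine ENNReal.tsum_le_tsum fun j => ?_
      by_cases hj : f j < m
      · rw [if_pos hj, ← Function.iterate_succ_apply' (Tm q H f lam m) k 0]
        exact mul_le_mul_right (Tm_iter_mono_k k j) _
      · rw [if_neg hj]; exact zero_le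
    · rw [if_neg h]; exact zero_le

private lemma Tm_iter_succ_eq {f : E → ℕ} {lam : ℝ} {m : ℕ} {i : E} (hm : f i < m) (k : ℕ) :
    (Tm q H f lam m)^[k + 1] 0 i
      = Lop q H lam ((Tm q H f lam m)^[k] 0) i + gvec q lam i := by
  rw [Function.iterate_succ_apply', Tm_apply, if_pos hm]
  congr 1
  refine tsum_congr fun j => ?_
  by_cases hj : f j < m
  · rw [if_pos hj]
  · rw [if_neg hj, Tm_iter_supp k j hj, mul_zero]

private lemma Fop_iter_le_iSup_Tm {f : E → ℕ} {lam : ℝ} :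
    ∀ k, ∀ i : E, (Fop q H lam)^[k] 0 i ≤ ⨆ m, (Tm q H f lam m)^[k] 0 i := by
  intro k
  induction k with
  | zero => intro i; exact zero_le
  | succ k ih =>
    intro i
    rw [Function.iterate_succ_apply']
    have hmono : Monotone fun m => ((Tm q H f lam m)^[k] (0 : E → ℝ≥0∞)) :=
      fun m m' hmm' j => Tm_iter_mono_m hmm' k j
    have h1 : Fop q H lam ((Fop q H lam)^[k] 0) i
        ≤ Fop q H lam (fun j => ⨆ m, (Tm q H f lam m)^[k] 0 j) i := Fop_mono (fun j => ih j) i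
    refine h1.trans ?_
    have h2 : Fop q H lam (fun j => ⨆ m, (Tm q H f lam m)^[k] 0 j) i
        = ⨆ m, (Lop q H lam ((Tm q H f lam m)^[k] 0) i + gvec q lam i) := by
      unfold Fop
      rw [Lop_iSup hmono, ENNReal.iSup_add]
    rw [h2]
    refine iSup_le fun m => ?_
    set m2 := max m (f i + 1) with hm2
    have him : f i < m2 := lt_of_lt_of_le (Nat.lt_succ_self _) (le_max_right _ _)
    calc Lop q H lam ((Tm q H f lam m)^[k] 0) i + gvec q lam i
        ≤ Lop q H lam ((Tm q H f lam m2)^[k] 0) i + gvec q lam i :=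
          add_le_add_left (Lop_mono (fun j => Tm_iter_mono_m (le_max_left _ _) k j) i) _
      _ = (Tm q H f lam m2)^[k + 1] 0 i := (Tm_iter_succ_eq him k).symm
      _ ≤ ⨆ m', (Tm q H f lam m')^[k + 1] 0 i :=
          le_iSup (fun m' => (Tm q H f lam m')^[k + 1] 0 i) m2

end NEEAux

/-- Inverse problem criterion for exponential ergodicity of a continuous-time Markov chain. -/
theorem non_exponentially_ergodic_iff_test_sequence {E : Type*} [Countable E]
    (q : E → E → ℝ) (H : Set E)
    (hq : IsQMatrix q) (hirr : MatIrreducible q) (hreg : QRegular q)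
    (hrec : MatRecurrent (embed q)) (hHne : H.Nonempty) (hHfin : H.Finite)
    (hqinf : 0 < ⨅ i, -q i i)
    (herg : ∃ x : E → ℝ≥0∞,
      IsMinSol (fun i j => if j ∈ H then 0 else embed q i j)
        (fun i => (ENNReal.ofReal (-q i i))⁻¹) x ∧ ∀ i, x i ≠ ⊤) :
    (¬ ∃ lam ∈ Set.Ioo (0 : ℝ) (⨅ i, -q i i), ∃ e : E → ℝ≥0∞,
        IsMinSol
          (fun i j => if j ∈ H then 0 else
            ENNReal.ofReal ((-q i i) / (-q i i - lam)) * embed q i j)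
          (fun i => ENNReal.ofReal (1 / (-q i i - lam))) e ∧ ∀ i, e i ≠ ⊤) ↔
      ∃ lam : ℕ → ℝ, ∃ y : ℕ → E → ℝ,
        (∀ n, lam n ∈ Set.Ioo (0 : ℝ) (⨅ i, -q i i)) ∧
        Tendsto lam atTop (𝓝 0) ∧
        (∀ n : ℕ, (Function.support (y n)).Finite ∧
          ∀ i : E, (y n i : EReal) ≤
            (((-q i i) / (-q i i - lam n) : ℝ) : EReal) *
              (∑' j : E, if j ∈ H then 0 else (embed q i j : EReal) * (y n j : EReal))
              + ((1 / (-q i i - lam n) : ℝ) : EReal)) ∧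
        (⨆ n : ℕ, ⨆ i ∈ H, (y n i : EReal)) = ⊤ := by
  clear hreg hrec herg
  have hEne : Nonempty E := ⟨hHne.choose⟩
  have hbdd : BddBelow (Set.range fun i : E => -q i i) := by
    refine ⟨0, ?_⟩
    rintro x ⟨i, rfl⟩
    exact (hq.diag_neg i).le
  constructor
  · -- from non-exponential-ergodicity, construct the test sequence
    intro hno
    push_neg at hno
    obtain ⟨f, hf⟩ := exists_injective_nat E
    have hEm : ∀ m : ℕ, ({ j : E | f j < m}).Finite := fun m =>
      Set.Finite.preimage hf.injOn (Set.finite_Iio m)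
    set D : ℝ := ⨅ i, -q i i with hD
    set lamseq : ℕ → ℝ := fun n => D / (n + 2) with hlamseq
    have hIoo : ∀ n, lamseq n ∈ Set.Ioo (0:ℝ) D := by
      intro n
      constructor
      · exact div_pos hqinf (by positivity)
      · refine div_lt_self hqinf ?_
        have : (0:ℝ) ≤ (n:ℝ) := Nat.cast_nonneg n
        linarith
    have htend : Tendsto lamseq atTop (𝓝 0) := by
      have h := (tendsto_const_div_atTop_nhds_zero_nat D).comp (tendsto_add_atTop_nat 2)
      refine h.congr fun n => ?_
      simp only [Function.comp_apply, hlamseq]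
      push_cast
      ring
    have hex : ∀ n : ℕ, ∃ yy : E → ℝ, (Function.support yy).Finite ∧
        (∀ i : E, (yy i : EReal) ≤
          (((-q i i) / (-q i i - lamseq n) : ℝ) : EReal) *
            (∑' j : E, if j ∈ H then 0 else (embed q i j : EReal) * (yy j : EReal))
            + ((1 / (-q i i - lamseq n) : ℝ) : EReal)) ∧
        ∃ h ∈ H, (n : ℝ) < yy h := by
      intro n
      set lam := lamseq n with hlamn
      have hlam : ∀ i, lam < -q i i := fun i =>
        lt_of_lt_of_le (hIoo n).2 (ciInf_le hbdd i)
      have hminsol : IsMinSol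
          (fun i j => if j ∈ H then 0 else
            ENNReal.ofReal ((-q i i) / (-q i i - lam)) * embed q i j)
          (fun i => ENNReal.ofReal (1 / (-q i i - lam))) (esol q H lam) :=
        esol_isMinSol lam
      obtain ⟨istar, histar⟩ := hno lam (hIoo n) (esol q H lam) hminsol
      obtain ⟨hh, hhH, hhtop⟩ := exists_top_in_H hq hirr hlam hHne histar
      have hsup : (⨆ m, ⨆ k, (Tm q H f lam m)^[k] 0 hh) = ⊤ := by
        rw [eq_top_iff, ← hhtop]
        calc esol q H lam hh ≤ ⨆ k, ⨆ m, (Tm q H f lam m)^[k] 0 hh :=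
              iSup_mono fun k => Fop_iter_le_iSup_Tm k hh
          _ = ⨆ m, ⨆ k, (Tm q H f lam m)^[k] 0 hh := iSup_comm
      have h4 : ((n : ℕ) : ℝ≥0∞) < ⨆ m, ⨆ k, (Tm q H f lam m)^[k] 0 hh := by
        rw [hsup]; exact ENNReal.natCast_lt_top n
      rw [lt_iSup_iff] at h4
      obtain ⟨m, h4⟩ := h4
      rw [lt_iSup_iff] at h4
      obtain ⟨k, h4⟩ := h4
      set x : E → ℝ≥0∞ := (Tm q H f lam m)^[k] 0 with hx
      have hxne : ∀ i, x i ≠ ⊤ := fun i => Tm_iter_ne_top hf k i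
      have hxsupp : (Function.support x).Finite := by
        refine (hEm m).subset ?_
        intro i hi
        by_contra h5
        exact hi (Tm_iter_supp k i h5)
      refine ⟨fun i => (x i).toReal, ?_, ?_, hh, hhH, ?_⟩
      · refine hxsupp.subset ?_
        intro i hi
        simp only [Function.mem_support] at hi ⊢
        intro h6
        apply hi
        rw [h6, ENNReal.toReal_zero]
      · intro i
        calc (((x i).toReal : ℝ) : EReal) = ((x i : ℝ≥0∞) : EReal) := ecoe_toReal (hxne i)
          _ ≤ ((Lop q H lam x i + gvec q lam i : ℝ≥0∞) : EReal) :=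
              EReal.coe_ennreal_le_coe_ennreal_iff.2 (Tm_iter_subsol k i)
          _ = _ := (ereal_rhs_eq hq hlam hxne hxsupp i).symm
      · have h7 := (ENNReal.toReal_lt_toReal (ENNReal.natCast_ne_top n) (hxne hh)).2 h4
        simpa using h7
    choose yy hsupp hineq hbig using hex
    refine ⟨lamseq, yy, hIoo, htend, fun n => ⟨hsupp n, hineq n⟩, ?_⟩
    rw [iSup_eq_top]
    intro b hb
    obtain ⟨n, hn⟩ := exists_nat_gt (b.toReal)
    have hbn : b < ((n : ℝ) : EReal) :=
      lt_of_le_of_lt (EReal.le_coe_toReal hb.ne) (EReal.coe_lt_coe_iff.2 hn)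
    obtain ⟨h, hH, hyh⟩ := hbig n
    refine ⟨n, lt_of_lt_of_le (hbn.trans (EReal.coe_lt_coe_iff.2 hyh)) ?_⟩
    exact le_iSup₂ (f := fun i (_ : i ∈ H) => ((yy n i : ℝ) : EReal)) h hH
  · -- a blowing-up test sequence rules out exponential ergodicity
    rintro ⟨lam, y, hIoo, htend, hprop, hsup⟩
    rintro ⟨lamstar, hmem, estar, hminsol, hfin⟩
    have hlows : ∀ i, lamstar < -q i i := fun i => lt_of_lt_of_le hmem.2 (ciInf_le hbdd i)
    have hstar : ∀ i, estar i = (∑' j, Amat q H lamstar i j * estar j) + gvec q lamstar i :=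
      hminsol.1
    obtain ⟨N, hN⟩ := Filter.eventually_atTop.1 (htend.eventually_lt_const hmem.1)
    set Hfin := hHfin.toFinset with hHf
    have hHfne : Hfin.Nonempty := by
      rw [hHf, Set.Finite.toFinset_nonempty]
      exact hHne
    set BH : ℝ := Hfin.sup' hHfne (fun i => (estar i).toReal) with hBH
    have hBH0 : 0 ≤ BH := by
      obtain ⟨i0, hi0⟩ := hHfne
      exact le_trans ENNReal.toReal_nonneg (Finset.le_sup' (fun i => (estar i).toReal) hi0)
    have hsum0 : 0 ≤ ∑ n ∈ Finset.range N, ∑ i ∈ Hfin, |y n i| :=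
      Finset.sum_nonneg fun n _ => Finset.sum_nonneg fun i _ => abs_nonneg _
    set B : ℝ := BH + ∑ n ∈ Finset.range N, ∑ i ∈ Hfin, |y n i| with hB
    have hble : ∀ n, ∀ i ∈ H, y n i ≤ B := by
      intro n i hi
      rcases le_or_gt N n with hn | hn
      · have hb := sub_le_estar hq (hN n hn).le hlows hstar hfin (hprop n).1 (hprop n).2 i
        refine hb.trans (le_trans ?_ (le_add_of_nonneg_right hsum0))
        exact Finset.le_sup' (fun i => (estar i).toReal) (hHfin.mem_toFinset.2 hi)
      · have h1 : y n i ≤ ∑ i ∈ Hfin, |y n i| :=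
          le_trans (le_abs_self _)
            (Finset.single_le_sum (f := fun j => |y n j|) (fun j _ => abs_nonneg _)
              (hHfin.mem_toFinset.2 hi))
        have h2 : (∑ i ∈ Hfin, |y n i|) ≤ ∑ n ∈ Finset.range N, ∑ i ∈ Hfin, |y n i| :=
          Finset.single_le_sum (f := fun n => ∑ i ∈ Hfin, |y n i|)
            (fun n _ => Finset.sum_nonneg fun i _ => abs_nonneg _) (Finset.mem_range.2 hn)
        exact le_trans h1 (le_trans h2 (le_add_of_nonneg_left hBH0))
    have hfinal : (⨆ n : ℕ, ⨆ i ∈ H, ((y n i : ℝ) : EReal)) ≤ (B : EReal) := by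
      refine iSup_le fun n => iSup_le fun i => iSup_le fun hi => ?_
      exact EReal.coe_le_coe_iff.2 (hble n i hi)
    rw [hsup] at hfinal
    exact (EReal.coe_ne_top B) (top_le_iff.1 hfinal)
end
end

section
/- Let P be an irreducible aperiodic stochastic matrix on a countable set E whose chain is recurrent, and let H be a nonempty finite subset of E. Then the chain is non-ergodic (i.e. 𝔼_i σ_H = ∞ for some i ∈ E) if and only if there exists a sequence of functions y⁽ⁿ⁾ : E → ℝ (n ≥ 1) such that: (1) for each n, sup_{i∈E} y⁽ⁿ⁾(i) < ∞ and y⁽ⁿ⁾(i) ≤ Σ_{j∉H} P(i,j)·y⁽ⁿ⁾(j) + 1 for every i ∈ E; and (2) sup_{n≥1} max_{i∈H} y⁽ⁿ⁾(i) = ∞. -/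
open scoped ENNReal NNReal BigOperators Classical Topology
open Filter Set

noncomputable section

namespace NonErgAux

open ENNReal Filter

variable {E : Type*} (P : E → E → ℝ) (H : Set E)

/-- Taboo transition matrix in `ℝ≥0∞`. -/
def Q (i j : E) : ℝ≥0∞ := if j ∈ H then 0 else ENNReal.ofReal (P i j)

/-- `T k i = ℙ_i (σ_H ≥ k+1)`. -/
def T (k : ℕ) (i : E) : ℝ≥0∞ := ∑' m : ℕ, sigmaDist P H (m + k) i

/-- `g n i = 𝔼_i (σ_H ∧ n)` (truncated mean). -/
def g (n : ℕ) (i : E) : ℝ≥0∞ := ∑ k ∈ Finset.range n, T P H k i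

/-- `M i = 𝔼_i σ_H`. -/
def M (i : E) : ℝ≥0∞ := ∑' k : ℕ, T P H k i

lemma T_zero (hrec : DRecurrent P H) (i : E) : T P H 0 i = 1 := hrec i

lemma sigmaDist_succ (n : ℕ) (i : E) :
    sigmaDist P H (n + 1) i
      = ∑' j : E, if j ∈ H then 0 else ENNReal.ofReal (P i j) * sigmaDist P H n j := rfl

lemma T_succ (k : ℕ) (i : E) :
    T P H (k + 1) i = ∑' j : E, Q P H i j * T P H k j := by
  have h1 : T P H (k + 1) i
      = ∑' (m : ℕ) (j : E), if j ∈ H then 0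
          else ENNReal.ofReal (P i j) * sigmaDist P H (m + k) j :=
    tsum_congr fun m => sigmaDist_succ P H (m + k) i
  rw [h1, ENNReal.tsum_comm]
  refine tsum_congr fun j => ?_
  unfold Q
  split_ifs with hj
  · simp
  · rw [ENNReal.tsum_mul_left]; rfl

lemma T_le_one (hrec : DRecurrent P H) (k : ℕ) (i : E) : T P H k i ≤ 1 := by
  have h := ENNReal.tsum_comp_le_tsum_of_injective (add_left_injective k)
    (fun n => sigmaDist P H n i)
  rw [hrec i] at h
  exact h

lemma M_eq_dMoment (i : E) : M P H i = dMoment P H 1 i := by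
  have hA : ∀ k : ℕ, T P H k i
      = ∑' n : ℕ, (if k ≤ n then sigmaDist P H n i else 0) := by
    intro k
    have hsupp : Function.support (fun n => if k ≤ n then sigmaDist P H n i else 0)
        ⊆ Set.range (fun m => m + k) := by
      intro n hn
      by_cases h : k ≤ n
      · exact ⟨n - k, Nat.sub_add_cancel h⟩
      · simp only [Function.mem_support, if_neg h] at hn; exact absurd rfl hn
    have hinj := Function.Injective.tsum_eq (g := fun m => m + k) (add_left_injective k)
      (f := fun n => if k ≤ n then sigmaDist P H n i else 0) hsupp
    rw [← hinj]
    exact tsum_congr fun m => (if_pos (Nat.le_add_left k m)).symm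
  have h2 : M P H i = ∑' (k : ℕ) (n : ℕ), (if k ≤ n then sigmaDist P H n i else 0) :=
    tsum_congr hA
  rw [h2, ENNReal.tsum_comm]
  refine tsum_congr fun n => ?_
  have h3 : ∑' k : ℕ, (if k ≤ n then sigmaDist P H n i else 0)
      = ∑ k ∈ Finset.range (n + 1), (if k ≤ n then sigmaDist P H n i else 0) :=
    tsum_eq_sum (fun k hk => if_neg (by simpa using Finset.mem_range.not.mp hk))
  rw [h3, Finset.sum_congr rfl (fun k hk => if_pos (Nat.lt_succ_iff.mp (Finset.mem_range.mp hk)))]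
  rw [Finset.sum_const, Finset.card_range, nsmul_eq_mul, pow_one]

lemma M_rec (i : E) : M P H i = T P H 0 i + ∑' j : E, Q P H i j * M P H j := by
  have h1 : M P H i = T P H 0 i + ∑' k : ℕ, T P H (k + 1) i :=
    tsum_eq_zero_add' ENNReal.summable
  rw [h1]
  congr 1
  calc ∑' k : ℕ, T P H (k + 1) i
      = ∑' (k : ℕ) (j : E), Q P H i j * T P H k j := tsum_congr fun k => T_succ P H k i
    _ = ∑' (j : E) (k : ℕ), Q P H i j * T P H k j := ENNReal.tsum_comm
    _ = ∑' j : E, Q P H i j * M P H j := tsum_congr fun j => ENNReal.tsum_mul_left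

lemma g_succ (n : ℕ) (i : E) :
    g P H (n + 1) i = T P H 0 i + ∑' j : E, Q P H i j * g P H n j := by
  unfold g
  rw [Finset.sum_range_succ' (fun k => T P H k i) n, add_comm]
  congr 1
  calc ∑ k ∈ Finset.range n, T P H (k + 1) i
      = ∑ k ∈ Finset.range n, ∑' j : E, Q P H i j * T P H k j :=
        Finset.sum_congr rfl fun k _ => T_succ P H k i
    _ = ∑' j : E, ∑ k ∈ Finset.range n, Q P H i j * T P H k j :=
        (Summable.tsum_finsetSum fun k _ => ENNReal.summable).symm
    _ = ∑' j : E, Q P H i j * ∑ k ∈ Finset.range n, T P H k j :=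
        tsum_congr fun j => (Finset.mul_sum _ _ _).symm

lemma g_le (hrec : DRecurrent P H) (n : ℕ) (i : E) : g P H n i ≤ (n : ℝ≥0∞) := by
  calc g P H n i ≤ ∑ _k ∈ Finset.range n, (1 : ℝ≥0∞) :=
        Finset.sum_le_sum fun k _ => T_le_one P H hrec k i
    _ = (n : ℝ≥0∞) := by simp

lemma g_ne_top (hrec : DRecurrent P H) (n : ℕ) (i : E) : g P H n i ≠ ⊤ :=
  fun h => by simpa [h] using g_le P H hrec n i

lemma g_mono (n : ℕ) (i : E) : g P H n i ≤ g P H (n + 1) i :=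
  Finset.sum_le_sum_of_subset (Finset.range_subset_range.mpr (Nat.le_succ n))

lemma iSup_g (i : E) : ⨆ n : ℕ, g P H n i = M P H i :=
  ENNReal.tsum_eq_iSup_nat.symm

/-- Coercion `ℝ → EReal` as an additive monoid hom. -/
noncomputable def realEReal : ℝ →+ EReal := ⟨⟨Real.toEReal, EReal.coe_zero⟩, EReal.coe_add⟩

lemma tsum_coe_ereal {ι : Type*} (f : ι → ℝ) (h : Summable f) :
    ∑' i, (f i : EReal) = ((∑' i, f i : ℝ) : EReal) :=
  (h.hasSum.map realEReal continuous_coe_real_ereal).tsum_eq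

lemma ereal_tsum_le {ι : Type*} (f : ι → EReal) (gr : ι → ℝ) (hg : Summable gr)
    (hg0 : ∀ i, 0 ≤ gr i) (h : ∀ i, f i ≤ (gr i : EReal)) :
    ∑' i, f i ≤ ((∑' i, gr i : ℝ) : EReal) := by
  by_cases hf : Summable f
  · rw [← tsum_coe_ereal gr hg]
    exact Summable.tsum_le_tsum h hf (hg.hasSum.map realEReal continuous_coe_real_ereal).summable
  · rw [tsum_eq_zero_of_not_summable hf]
    exact_mod_cast tsum_nonneg hg0

/-- Any test function satisfying the subinvariance inequality is dominated by the
mean return time. -/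
lemma bound_of_test (hP : IsStochastic P) (hrec : DRecurrent P H)
    (y : E → ℝ) (hb : BddAbove (Set.range y))
    (hy : ∀ i : E, (y i : EReal) ≤
      (∑' j : E, if j ∈ H then 0 else (P i j : EReal) * (y j : EReal)) + 1)
    (i : E) : ENNReal.ofReal (y i) ≤ M P H i := by
  obtain ⟨b, hbb⟩ := hb
  set B : ℝ := max b 0 with hB
  set z : E → ℝ := fun j => max (y j) 0 with hz
  have hzB : ∀ j, z j ≤ B := fun j =>
    max_le_max (hbb (Set.mem_range_self j)) le_rfl
  have hz0 : ∀ j, 0 ≤ z j := fun j => le_max_right _ _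
  have hyz : ∀ j, y j ≤ z j := fun j => le_max_left _ _
  -- Step 1: subinvariance for `z` in `ℝ≥0∞`
  have step1 : ∀ a : E,
      ENNReal.ofReal (z a) ≤ 1 + ∑' j : E, Q P H a j * ENNReal.ofReal (z j) := by
    intro a
    set gr : E → ℝ := fun j => if j ∈ H then 0 else P a j * z j with hgr
    have hgr0 : ∀ j, 0 ≤ gr j := by
      intro j; simp only [hgr]
      split_ifs with hj
      · exact le_rfl
      · exact mul_nonneg (hP.1 a j) (hz0 j)
    have hgrS : Summable gr := by
      refine Summable.of_nonneg_of_le hgr0 (fun j => ?_) ((hP.2 a).summable.mul_left B)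
      simp only [hgr]
      split_ifs with hj
      · exact mul_nonneg (le_max_right b 0) (hP.1 a j)
      · rw [mul_comm B]
        exact mul_le_mul_of_nonneg_left (hzB j) (hP.1 a j)
    have hle : ∀ j, (if j ∈ H then (0 : EReal) else (P a j : EReal) * (y j : EReal))
        ≤ ((gr j : ℝ) : EReal) := by
      intro j
      simp only [hgr]
      split_ifs with hj
      · simp
      · rw [← EReal.coe_mul]
        exact_mod_cast mul_le_mul_of_nonneg_left (hyz j) (hP.1 a j)
    have h1 : (y a : EReal) ≤ ((∑' j, gr j : ℝ) : EReal) + 1 :=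
      le_trans (hy a) (add_le_add_left (ereal_tsum_le _ gr hgrS hgr0 hle) 1)
    have h2 : y a ≤ ∑' j, gr j + 1 := by
      rw [show ((1 : EReal)) = ((1 : ℝ) : EReal) from rfl, ← EReal.coe_add] at h1
      exact_mod_cast h1
    have h3 : z a ≤ ∑' j, gr j + 1 :=
      max_le h2 (add_nonneg (tsum_nonneg hgr0) zero_le_one)
    calc ENNReal.ofReal (z a) ≤ ENNReal.ofReal (∑' j, gr j + 1) :=
          ENNReal.ofReal_le_ofReal h3
      _ = ENNReal.ofReal (∑' j, gr j) + 1 := by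
          rw [ENNReal.ofReal_add (tsum_nonneg hgr0) zero_le_one, ENNReal.ofReal_one]
      _ = (∑' j, ENNReal.ofReal (gr j)) + 1 := by
          rw [ENNReal.ofReal_tsum_of_nonneg hgr0 hgrS]
      _ = 1 + ∑' j, Q P H a j * ENNReal.ofReal (z j) := by
          rw [add_comm]
          congr 1
          refine tsum_congr fun j => ?_
          simp only [hgr]
          unfold Q
          split_ifs with hj
          · simp
          · exact ENNReal.ofReal_mul (hP.1 a j)
  -- Step 2: induction on k
  have step2 : ∀ k : ℕ, ∀ a : E,
      ENNReal.ofReal (z a) ≤ M P H a + ENNReal.ofReal B * T P H k a := by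
    intro k
    induction k with
    | zero =>
      intro a
      rw [T_zero P H hrec a, mul_one]
      exact le_add_left (ENNReal.ofReal_le_ofReal (hzB a))
    | succ k ih =>
      intro a
      calc ENNReal.ofReal (z a)
          ≤ 1 + ∑' j : E, Q P H a j * ENNReal.ofReal (z j) := step1 a
        _ ≤ 1 + ∑' j : E, Q P H a j * (M P H j + ENNReal.ofReal B * T P H k j) :=
            add_le_add_right
              (ENNReal.tsum_le_tsum fun j => mul_le_mul_right (ih j) _) 1
        _ = 1 + ((∑' j : E, Q P H a j * M P H j)
              + ENNReal.ofReal B * ∑' j : E, Q P H a j * T P H k j) := by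
            congr 1
            rw [← ENNReal.tsum_mul_left, ← ENNReal.tsum_add]
            refine tsum_congr fun j => ?_
            rw [mul_add, mul_left_comm]
        _ = M P H a + ENNReal.ofReal B * T P H (k + 1) a := by
            rw [T_succ P H k a, ← add_assoc, ← T_zero P H hrec a, ← M_rec P H a]
  -- Step 3 & 4: pass to the limit using recurrence
  have hT0 : Tendsto (fun k => T P H k i) atTop (nhds 0) :=
    ENNReal.tendsto_sum_nat_add (fun n => sigmaDist P H n i)
      (by rw [hrec i]; exact ENNReal.one_ne_top)
  have hlim : Tendsto (fun k => M P H i + ENNReal.ofReal B * T P H k i) atTop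
      (nhds (M P H i)) := by
    have h1 := ENNReal.Tendsto.const_mul (a := ENNReal.ofReal B) hT0
      (Or.inr ENNReal.ofReal_ne_top)
    rw [mul_zero] at h1
    have h2 := h1.const_add (M P H i)
    rwa [add_zero] at h2
  have hzM : ENNReal.ofReal (z i) ≤ M P H i := ge_of_tendsto' hlim fun k => step2 k i
  exact le_trans (ENNReal.ofReal_le_ofReal (hyz i)) hzM

end NonErgAux

/-- Inverse problem criterion for ergodicity of a discrete-time Markov chain. -/
theorem discrete_non_ergodic_iff_test_sequence {E : Type*} [Countable E]
    (P : E → E → ℝ) (H : Set E)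
    (hP : IsStochastic P) (hirr : MatIrreducible P) (hap : MatAperiodic P)
    (hrec : DRecurrent P H) (hHne : H.Nonempty) (hHfin : H.Finite) :
    (∃ i, dMoment P H 1 i = ⊤) ↔
      ∃ y : ℕ → E → ℝ,
        (∀ n : ℕ, BddAbove (Set.range (y n)) ∧
          ∀ i : E, (y n i : EReal) ≤
            (∑' j : E, if j ∈ H then 0 else (P i j : EReal) * (y n j : EReal)) + 1) ∧
        (⨆ n : ℕ, ⨆ i ∈ H, (y n i : EReal)) = ⊤ := by
  classical
  constructor
  · rintro ⟨i₀, hi₀⟩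
    rw [← NonErgAux.M_eq_dMoment P H i₀] at hi₀
    have hEx : ∃ h ∈ H, NonErgAux.M P H h = ⊤ := by
      by_contra hcon
      push_neg at hcon
      have hstep : ∀ a j, NonErgAux.M P H a ≠ ⊤ → 0 < P a j → NonErgAux.M P H j ≠ ⊤ := by
        intro a j hMa hPaj
        by_cases hjH : j ∈ H
        · exact hcon j hjH
        · intro hMj
          apply hMa
          rw [NonErgAux.M_rec P H a]
          have h1 : NonErgAux.Q P H a j * NonErgAux.M P H j
              ≤ ∑' j' : E, NonErgAux.Q P H a j' * NonErgAux.M P H j' := ENNReal.le_tsum j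
          rw [hMj] at h1
          have h2 : NonErgAux.Q P H a j = ENNReal.ofReal (P a j) := if_neg hjH
          rw [h2, ENNReal.mul_top (by simp [ENNReal.ofReal_eq_zero, not_le, hPaj])] at h1
          rw [top_le_iff.mp h1]
          simp
      obtain ⟨h₀, hh₀⟩ := hHne
      by_cases hi₀H : i₀ ∈ H
      · exact hcon i₀ hi₀H hi₀
      · have hne : h₀ ≠ i₀ := fun he => hi₀H (he ▸ hh₀)
        have hall : ∀ j, Relation.TransGen (fun a b => 0 < P a b) h₀ j →
            NonErgAux.M P H j ≠ ⊤ := by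
          intro j hj
          induction hj with
          | single hr => exact hstep _ _ (hcon h₀ hh₀) hr
          | tail _ hr ih => exact hstep _ _ ih hr
        exact hall i₀ (hirr h₀ i₀ hne) hi₀
    obtain ⟨h, hhH, hMh⟩ := hEx
    refine ⟨fun n i => (NonErgAux.g P H n i).toReal, fun n => ⟨⟨(n : ℝ), ?_⟩, fun i => ?_⟩, ?_⟩
    · rintro _ ⟨i, rfl⟩
      calc (NonErgAux.g P H n i).toReal ≤ ((n : ℝ≥0∞)).toReal :=
            ENNReal.toReal_mono (ENNReal.natCast_ne_top n) (NonErgAux.g_le P H hrec n i)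
        _ = (n : ℝ) := by simp
    · -- the subinvariance inequality
      set r : E → ℝ := fun j => if j ∈ H then 0 else P i j * (NonErgAux.g P H n j).toReal
        with hr
      have hr0 : ∀ j, 0 ≤ r j := by
        intro j; simp only [hr]; split_ifs with hj
        · exact le_rfl
        · exact mul_nonneg (hP.1 i j) ENNReal.toReal_nonneg
      have hgtoR : ∀ j : E, (NonErgAux.g P H n j).toReal ≤ (n : ℝ) := by
        intro j
        calc (NonErgAux.g P H n j).toReal ≤ ((n : ℝ≥0∞)).toReal :=
              ENNReal.toReal_mono (ENNReal.natCast_ne_top n) (NonErgAux.g_le P H hrec n j)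
          _ = (n : ℝ) := by simp
      have hrS : Summable r := by
        refine Summable.of_nonneg_of_le hr0 (fun j => ?_)
          ((hP.2 i).summable.mul_left (n : ℝ))
        simp only [hr]; split_ifs with hj
        · exact mul_nonneg (Nat.cast_nonneg n) (hP.1 i j)
        · rw [mul_comm ((n : ℝ))]
          exact mul_le_mul_of_nonneg_left (hgtoR j) (hP.1 i j)
      have hcoe : (∑' j : E, if j ∈ H then 0
            else (P i j : EReal) * (((NonErgAux.g P H n j).toReal : ℝ) : EReal))
          = ((∑' j, r j : ℝ) : EReal) := by
        rw [← NonErgAux.tsum_coe_ereal r hrS]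
        refine tsum_congr fun j => ?_
        simp only [hr]
        split_ifs with hj
        · simp
        · rw [EReal.coe_mul]
      have hEN : NonErgAux.g P H n i ≤ ENNReal.ofReal (∑' j, r j + 1) := by
        calc NonErgAux.g P H n i ≤ NonErgAux.g P H (n + 1) i := NonErgAux.g_mono P H n i
          _ = NonErgAux.T P H 0 i + ∑' j : E, NonErgAux.Q P H i j * NonErgAux.g P H n j :=
              NonErgAux.g_succ P H n i
          _ = 1 + ∑' j : E, ENNReal.ofReal (r j) := by
              rw [NonErgAux.T_zero P H hrec i]
              congr 1
              refine tsum_congr fun j => ?_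
              simp only [hr]
              unfold NonErgAux.Q
              split_ifs with hj
              · simp
              · rw [ENNReal.ofReal_mul (hP.1 i j),
                  ENNReal.ofReal_toReal (NonErgAux.g_ne_top P H hrec n j)]
          _ = 1 + ENNReal.ofReal (∑' j, r j) := by
              rw [ENNReal.ofReal_tsum_of_nonneg hr0 hrS]
          _ = ENNReal.ofReal (∑' j, r j + 1) := by
              rw [ENNReal.ofReal_add (tsum_nonneg hr0) zero_le_one, ENNReal.ofReal_one,
                add_comm]
      have hreal : (NonErgAux.g P H n i).toReal ≤ ∑' j, r j + 1 := by
        have h4 := ENNReal.toReal_mono ENNReal.ofReal_ne_top hEN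
        rwa [ENNReal.toReal_ofReal (add_nonneg (tsum_nonneg hr0) zero_le_one)] at h4
      calc ((NonErgAux.g P H n i).toReal : EReal) ≤ ((∑' j, r j + 1 : ℝ) : EReal) := by
            exact_mod_cast hreal
        _ = ((∑' j, r j : ℝ) : EReal) + 1 := by rw [EReal.coe_add]; rfl
        _ = (∑' j : E, if j ∈ H then 0
              else (P i j : EReal) * (((NonErgAux.g P H n j).toReal : ℝ) : EReal)) + 1 := by
            rw [hcoe]
    · -- the supremum is infinite
      rw [iSup_eq_top]
      intro b hb
      obtain ⟨rr, hbrr, -⟩ := EReal.exists_between_coe_real hb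
      have hsup : (⨆ n : ℕ, NonErgAux.g P H n h) = ⊤ := by
        rw [NonErgAux.iSup_g]; exact hMh
      have hlt : ENNReal.ofReal rr < ⨆ n : ℕ, NonErgAux.g P H n h := by
        rw [hsup]; exact ENNReal.ofReal_lt_top
      obtain ⟨n, hn⟩ := lt_iSup_iff.mp hlt
      refine ⟨n, lt_of_lt_of_le hbrr ?_⟩
      have h1 : rr ≤ (NonErgAux.g P H n h).toReal := by
        have h2 : (ENNReal.ofReal rr).toReal ≤ (NonErgAux.g P H n h).toReal :=
          ENNReal.toReal_mono (NonErgAux.g_ne_top P H hrec n h) hn.le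
        rw [ENNReal.toReal_ofReal'] at h2
        exact le_trans (le_max_left rr 0) h2
      refine le_trans (by exact_mod_cast h1)
        (le_iSup₂ (f := fun i (_ : i ∈ H) => (((NonErgAux.g P H n i).toReal : ℝ) : EReal))
          h hhH)
  · rintro ⟨y, hy, hsup⟩
    by_contra hcon
    push_neg at hcon
    have hMfin : ∀ i, NonErgAux.M P H i ≠ ⊤ := by
      intro i; rw [NonErgAux.M_eq_dMoment]; exact hcon i
    have hbound : ∀ (n : ℕ) (i : E), y n i ≤ (NonErgAux.M P H i).toReal := by
      intro n i
      have hb := NonErgAux.bound_of_test P H hP hrec (y n) (hy n).1 (hy n).2 i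
      exact (ENNReal.ofReal_le_iff_le_toReal (hMfin i)).mp hb
    obtain ⟨h₀, hh₀⟩ := hHne
    have hFne : hHfin.toFinset.Nonempty := ⟨h₀, hHfin.mem_toFinset.mpr hh₀⟩
    set C : ℝ := hHfin.toFinset.sup' hFne fun i => (NonErgAux.M P H i).toReal with hC
    have htop : (⊤ : EReal) ≤ (C : EReal) := by
      rw [← hsup]
      refine iSup_le fun n => iSup₂_le fun i hi => ?_
      have h1 : y n i ≤ C := by
        refine le_trans (hbound n i) ?_
        rw [hC]
        exact Finset.le_sup' (fun i => (NonErgAux.M P H i).toReal)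
          (hHfin.mem_toFinset.mpr hi)
      exact_mod_cast h1
    exact absurd (lt_of_le_of_lt htop (EReal.coe_lt_top C)) (lt_irrefl _)
end
end

section
/- Let P be an irreducible aperiodic stochastic matrix on a countable set E whose chain is recurrent, and let H be a nonempty finite subset of E. Then the chain is non-strongly ergodic (i.e. sup_{i∈E} 𝔼_i σ_H = ∞) if and only if there exists a sequence of functions y⁽ⁿ⁾ : E∖H → ℝ (n ≥ 1) such that: (1) for each n, sup_{i∉H} y⁽ⁿ⁾(i) < ∞ and y⁽ⁿ⁾(i) ≤ Σ_{j∉H} P(i,j)·y⁽ⁿ⁾(j) + 1 for every i ∉ H; and (2) sup_{n≥1} sup_{i∉H} y⁽ⁿ⁾(i) = ∞. -/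
open scoped ENNReal NNReal BigOperators Classical Topology
open Filter Set

noncomputable section

namespace DSEProof

variable {E : Type*} (P : E → E → ℝ) (H : Set E)

/-- The taboo kernel. -/
def Qk (i j : E) : ℝ≥0∞ := if j ∈ H then 0 else ENNReal.ofReal (P i j)

/-- Tail probabilities `ℙ_i(σ_H > k)`. -/
def tailP (k : ℕ) (i : E) : ℝ≥0∞ := ∑' n, sigmaDist P H (n + k) i

lemma sigma_succ (n : ℕ) (i : E) :
    sigmaDist P H (n + 1) i = ∑' j, Qk P H i j * sigmaDist P H n j := by
  show (∑' j, if j ∈ H then 0 else ENNReal.ofReal (P i j) * sigmaDist P H n j) = _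
  refine tsum_congr fun j => ?_
  by_cases hj : j ∈ H <;> simp [Qk, hj]

lemma tail_zero (hrec : DRecurrent P H) (i : E) : tailP P H 0 i = 1 := by
  simpa [tailP] using hrec i

lemma tail_succ (k : ℕ) (i : E) :
    tailP P H (k + 1) i = ∑' j, Qk P H i j * tailP P H k j := by
  have h1 : ∀ n, sigmaDist P H (n + (k + 1)) i
      = ∑' j, Qk P H i j * sigmaDist P H (n + k) j := by
    intro n
    rw [show n + (k + 1) = (n + k) + 1 by ring, sigma_succ]
  calc tailP P H (k + 1) i
      = ∑' n, ∑' j, Qk P H i j * sigmaDist P H (n + k) j := tsum_congr h1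
    _ = ∑' j, ∑' n, Qk P H i j * sigmaDist P H (n + k) j := ENNReal.tsum_comm
    _ = ∑' j, Qk P H i j * tailP P H k j := tsum_congr fun j => ENNReal.tsum_mul_left

lemma tail_eq_ite (k : ℕ) (i : E) :
    tailP P H k i = ∑' m, if k ≤ m then sigmaDist P H m i else 0 := by
  rw [tailP]
  have hinj : Function.Injective (fun n : ℕ => n + k) := fun a b h => by simpa using h
  have := Function.Injective.tsum_eq hinj
    (f := fun m => if k ≤ m then sigmaDist P H m i else 0) ?_
  · rw [← this]
    exact tsum_congr fun n => by simp [Nat.le_add_left]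
  · intro m hm
    have : k ≤ m := by by_contra h; simp [h] at hm
    exact ⟨m - k, by simp; omega⟩

lemma tail_le_one (hrec : DRecurrent P H) (k : ℕ) (i : E) : tailP P H k i ≤ 1 := by
  rw [tail_eq_ite]
  calc (∑' m, if k ≤ m then sigmaDist P H m i else 0) ≤ ∑' m, sigmaDist P H m i :=
        ENNReal.tsum_le_tsum fun m => by split <;> simp
    _ = 1 := hrec i

lemma moment_eq_tsum_tail (i : E) : dMoment P H 1 i = ∑' k, tailP P H k i := by
  have h1 : ∀ k : ℕ, tailP P H k i = ∑' m, if k ≤ m then sigmaDist P H m i else 0 :=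
    fun k => tail_eq_ite P H k i
  rw [dMoment]
  have : (∑' k, tailP P H k i)
      = ∑' m, ∑' k : ℕ, if k ≤ m then sigmaDist P H m i else 0 := by
    rw [tsum_congr h1, ENNReal.tsum_comm]
  rw [this]
  refine tsum_congr fun m => ?_
  have hfin : (∑' k : ℕ, if k ≤ m then sigmaDist P H m i else 0)
      = ∑ k ∈ Finset.range (m + 1), if k ≤ m then sigmaDist P H m i else 0 := by
    refine tsum_eq_sum fun k hk => ?_
    have : ¬ k ≤ m := by simpa [Nat.lt_succ_iff] using (fun h => hk (Finset.mem_range.mpr (Nat.lt_succ_of_le h)))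
    simp [this]
  rw [hfin]
  have : ∀ k ∈ Finset.range (m + 1), (if k ≤ m then sigmaDist P H m i else 0) = sigmaDist P H m i := by
    intro k hk
    simp [Nat.lt_succ_iff.mp (Finset.mem_range.mp hk)]
  rw [Finset.sum_congr rfl this, Finset.sum_const, Finset.card_range, nsmul_eq_mul]
  push_cast
  ring


lemma rowsum (hP : IsStochastic P) (i : E) : ∑' j, ENNReal.ofReal (P i j) = 1 := by
  rw [← ENNReal.ofReal_tsum_of_nonneg (fun j => hP.1 i j) ⟨1, hP.2 i⟩, (hP.2 i).tsum_eq]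
  simp

lemma Qrow_le_one (hP : IsStochastic P) (i : E) : ∑' j, Qk P H i j ≤ 1 := by
  rw [← rowsum P hP i]
  exact ENNReal.tsum_le_tsum fun j => by by_cases hj : j ∈ H <;> simp [Qk, hj]

lemma one_le_moment (hrec : DRecurrent P H) (i : E) : 1 ≤ dMoment P H 1 i := by
  rw [← hrec i, dMoment]
  refine ENNReal.tsum_le_tsum fun n => ?_
  conv_lhs => rw [← one_mul (sigmaDist P H n i)]
  gcongr
  simp

lemma moment_eq (hrec : DRecurrent P H) (i : E) :
    dMoment P H 1 i = 1 + ∑' j, Qk P H i j * dMoment P H 1 j := by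
  rw [moment_eq_tsum_tail]
  have hsplit : (∑' k, tailP P H k i)
      = tailP P H 0 i + ∑' k : ℕ, if k = 0 then 0 else tailP P H k i := by
    have := ENNReal.tsum_eq_add_tsum_ite (f := fun k => tailP P H k i) 0
    rw [this]
    congr 1
    exact tsum_congr fun k => by congr 1
  have hshift : (∑' k : ℕ, if k = 0 then 0 else tailP P H k i)
      = ∑' k : ℕ, tailP P H (k + 1) i := by
    symm
    have hinj : Function.Injective (fun n : ℕ => n + 1) := fun a b h => by simpa using h
    have := Function.Injective.tsum_eq hinj
      (f := fun k : ℕ => if k = 0 then 0 else tailP P H k i) ?_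
    · rw [← this]
      exact tsum_congr fun k => by simp
    · intro m hm
      have : m ≠ 0 := by by_contra h; simp [h] at hm
      exact ⟨m - 1, by simp; omega⟩
  rw [hsplit, hshift, tail_zero P H hrec]
  congr 1
  calc (∑' k, tailP P H (k + 1) i)
      = ∑' k, ∑' j, Qk P H i j * tailP P H k j := tsum_congr fun k => tail_succ P H k i
    _ = ∑' j, ∑' k, Qk P H i j * tailP P H k j := ENNReal.tsum_comm
    _ = ∑' j, Qk P H i j * dMoment P H 1 j :=
        tsum_congr fun j => by rw [ENNReal.tsum_mul_left, ← moment_eq_tsum_tail]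

/-- Iterates: expected time to hit `H` truncated at horizon `n`. -/
def uIter (n : ℕ) (i : E) : ℝ≥0∞ := ∑ k ∈ Finset.range n, tailP P H k i

lemma uIter_mono {n m : ℕ} (h : n ≤ m) (i : E) : uIter P H n i ≤ uIter P H m i :=
  Finset.sum_le_sum_of_subset (Finset.range_subset_range.mpr h)

lemma uIter_le (hrec : DRecurrent P H) (n : ℕ) (i : E) : uIter P H n i ≤ n := by
  calc uIter P H n i ≤ ∑ k ∈ Finset.range n, 1 :=
        Finset.sum_le_sum fun k _ => tail_le_one P H hrec k i
    _ = n := by simp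

lemma uIter_succ (hrec : DRecurrent P H) (n : ℕ) (i : E) :
    uIter P H (n + 1) i = 1 + ∑' j, Qk P H i j * uIter P H n j := by
  rw [uIter, Finset.sum_range_succ']
  rw [tail_zero P H hrec]
  have : ∀ k ∈ Finset.range n, tailP P H (k + 1) i = ∑' j, Qk P H i j * tailP P H k j :=
    fun k _ => tail_succ P H k i
  rw [Finset.sum_congr rfl this, ← Summable.tsum_finsetSum (fun k _ => ENNReal.summable)]
  rw [add_comm]
  congr 1
  refine tsum_congr fun j => ?_
  rw [uIter, Finset.mul_sum]

lemma iSup_uIter (i : E) : (⨆ n, uIter P H n i) = dMoment P H 1 i := by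
  rw [moment_eq_tsum_tail, ENNReal.tsum_eq_iSup_nat]
  rfl


def realToERealHom : ℝ →+ EReal where
  toFun := Real.toEReal
  map_zero' := rfl
  map_add' := EReal.coe_add

lemma hasSum_ereal_of_real {ι : Type*} {f : ι → ℝ} {a : ℝ} (h : HasSum f a) :
    HasSum (fun i => (f i : EReal)) ((a : ℝ) : EReal) := by
  have := h.map realToERealHom continuous_coe_real_ereal
  exact this

lemma ereal_finset_sum {ι : Type*} (f : ι → ℝ) (s : Finset ι) :
    ∑ l ∈ s, ((f l : ℝ) : EReal) = ((∑ l ∈ s, f l : ℝ) : EReal) := by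
  induction s using Finset.induction with
  | empty => simp
  | @insert a s h ih => rw [Finset.sum_insert h, Finset.sum_insert h, ih, ← EReal.coe_add]

end DSEProof
open DSEProof in
/-- Inverse problem criterion for strong ergodicity of a discrete-time Markov chain. -/
theorem discrete_non_strongly_ergodic_iff_test_sequence {E : Type*} [Countable E]
    (P : E → E → ℝ) (H : Set E)
    (hP : IsStochastic P) (hirr : MatIrreducible P) (hap : MatAperiodic P)
    (hrec : DRecurrent P H) (hHne : H.Nonempty) (hHfin : H.Finite) :
    (⨆ i, dMoment P H 1 i) = ⊤ ↔
      ∃ y : ℕ → E → ℝ,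
        (∀ n : ℕ, BddAbove (y n '' {i | i ∉ H}) ∧
          ∀ i ∉ H, (y n i : EReal) ≤
            (∑' j : E, if j ∈ H then 0 else (P i j : EReal) * (y n j : EReal)) + 1) ∧
        (⨆ n : ℕ, ⨆ i : E, ⨆ (_ : i ∉ H), (y n i : EReal)) = ⊤ := by
  constructor
  · intro hsup
    have hDtop : (⨆ i, ⨆ _ : i ∉ H, dMoment P H 1 i) = ⊤ := by
      by_contra hD
      have hle : ∀ i, dMoment P H 1 i ≤ 1 + ⨆ i, ⨆ _ : i ∉ H, dMoment P H 1 i := by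
        intro i
        rw [moment_eq P H hrec i]
        gcongr
        calc (∑' j, Qk P H i j * dMoment P H 1 j)
            ≤ ∑' j, Qk P H i j * ⨆ i, ⨆ _ : i ∉ H, dMoment P H 1 i := by
              refine ENNReal.tsum_le_tsum fun j => ?_
              by_cases hj : j ∈ H
              · simp [Qk, hj]
              · exact mul_le_mul_right
                  (le_iSup₂ (f := fun j (_ : j ∉ H) => dMoment P H 1 j) j hj) _
          _ = (∑' j, Qk P H i j) * ⨆ i, ⨆ _ : i ∉ H, dMoment P H 1 i := ENNReal.tsum_mul_right
          _ ≤ 1 * ⨆ i, ⨆ _ : i ∉ H, dMoment P H 1 i :=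
              mul_le_mul_left (Qrow_le_one P H hP i) _
          _ = _ := one_mul _
      have htop : (⊤ : ℝ≥0∞) ≤ 1 + ⨆ i, ⨆ _ : i ∉ H, dMoment P H 1 i := hsup ▸ iSup_le hle
      have := top_le_iff.mp htop
      rcases ENNReal.add_eq_top.mp this.symm.symm with h | h
      · simp at h
      · exact hD h
    have hU : (⨆ n, ⨆ i, ⨆ _ : i ∉ H, uIter P H n i) = ⊤ := by
      rw [iSup_comm]
      calc (⨆ i, ⨆ n, ⨆ _ : i ∉ H, uIter P H n i)
          = ⨆ i, ⨆ _ : i ∉ H, ⨆ n, uIter P H n i := iSup_congr fun i => iSup_comm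
        _ = ⨆ i, ⨆ _ : i ∉ H, dMoment P H 1 i := by
            refine iSup_congr fun i => iSup_congr fun _ => iSup_uIter P H i
        _ = ⊤ := hDtop
    have hufin : ∀ n (j : E), uIter P H n j ≠ ⊤ := fun n j =>
      (lt_of_le_of_lt (uIter_le P H hrec n j) (ENNReal.natCast_lt_top n)).ne
    refine ⟨fun n i => (uIter P H n i).toReal, fun n => ⟨⟨(n : ℝ), ?_⟩, ?_⟩, ?_⟩
    · rintro r ⟨i, -, rfl⟩
      have := ENNReal.toReal_mono (by simp : ((n : ℕ) : ℝ≥0∞) ≠ ⊤) (uIter_le P H hrec n i)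
      simpa using this
    · intro i hi
      set W := ∑' j, Qk P H i j * uIter P H n j with hW
      have hWle : W ≤ (n : ℝ≥0∞) := by
        calc W ≤ ∑' j, ENNReal.ofReal (P i j) * (n : ℝ≥0∞) := by
              refine ENNReal.tsum_le_tsum fun j => ?_
              by_cases hj : j ∈ H
              · simp [Qk, hj]
              · simp only [Qk, hj, if_false]
                exact mul_le_mul_right (uIter_le P H hrec n j) _
          _ = 1 * (n : ℝ≥0∞) := by rw [ENNReal.tsum_mul_right, rowsum P hP i]
          _ = (n : ℝ≥0∞) := one_mul _
      have hWtop : W ≠ ⊤ := (lt_of_le_of_lt hWle (ENNReal.natCast_lt_top n)).ne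
      set f : E → ℝ := fun j => if j ∈ H then 0 else P i j * (uIter P H n j).toReal with hf
      have hf0 : ∀ j, 0 ≤ f j := by
        intro j
        by_cases hj : j ∈ H
        · simp [hf, hj]
        · simp only [hf, hj, if_false]
          exact mul_nonneg (hP.1 i j) ENNReal.toReal_nonneg
      have hfle : ∀ j, f j ≤ (n : ℝ) * P i j := by
        intro j
        by_cases hj : j ∈ H
        · simp only [hf, hj, if_true]
          exact mul_nonneg (Nat.cast_nonneg n) (hP.1 i j)
        · simp only [hf, hj, if_false, mul_comm (P i j)]
          refine mul_le_mul_of_nonneg_right ?_ (hP.1 i j)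
          have := ENNReal.toReal_mono (by simp : ((n:ℕ):ℝ≥0∞) ≠ ⊤) (uIter_le P H hrec n j)
          simpa using this
      have hfsum : Summable f :=
        Summable.of_nonneg_of_le hf0 hfle ((Summable.mul_left _ ⟨1, hP.2 i⟩))
      have hofReal : ∀ j, ENNReal.ofReal (f j) = Qk P H i j * uIter P H n j := by
        intro j
        by_cases hj : j ∈ H
        · simp [hf, Qk, hj]
        · simp only [hf, Qk, hj, if_false]
          rw [ENNReal.ofReal_mul (hP.1 i j), ENNReal.ofReal_toReal (hufin n j)]
      have hWtoReal : W.toReal = ∑' j, f j := by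
        have h1 : W = ∑' j, ENNReal.ofReal (f j) := (tsum_congr hofReal).symm
        rw [h1, ENNReal.tsum_toReal_eq (fun j => ENNReal.ofReal_ne_top)]
        exact tsum_congr fun j => ENNReal.toReal_ofReal (hf0 j)
      have hT : (∑' j : E, if j ∈ H then 0
            else (P i j : EReal) * (((uIter P H n j).toReal : ℝ) : EReal))
          = ((W.toReal : ℝ) : EReal) := by
        have h1 : HasSum (fun j => ((f j : ℝ) : EReal)) (((∑' j, f j : ℝ) : ℝ) : EReal) :=
          hasSum_ereal_of_real hfsum.hasSum
        have h2 : ∀ j, ((f j : ℝ) : EReal) = if j ∈ H then 0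
            else (P i j : EReal) * (((uIter P H n j).toReal : ℝ) : EReal) := by
          intro j
          by_cases hj : j ∈ H
          · simp [hf, hj]
          · simp only [hf, hj, if_false, EReal.coe_mul]
        calc (∑' j : E, if j ∈ H then 0
              else (P i j : EReal) * (((uIter P H n j).toReal : ℝ) : EReal))
            = ∑' j, ((f j : ℝ) : EReal) := tsum_congr fun j => (h2 j).symm
          _ = ((W.toReal : ℝ) : EReal) := by rw [h1.tsum_eq, hWtoReal]
      rw [hT]
      have hreal : (uIter P H n i).toReal ≤ W.toReal + 1 := by
        have h1 : uIter P H n i ≤ 1 + W := by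
          rw [← uIter_succ P H hrec n i]
          exact uIter_mono P H (Nat.le_succ n) i
        have h2 := ENNReal.toReal_mono (ENNReal.add_ne_top.mpr ⟨by simp, hWtop⟩) h1
        rw [ENNReal.toReal_add (by simp) hWtop] at h2
        simpa [add_comm] using h2
      exact_mod_cast hreal
    · rw [iSup_eq_top]
      intro b hb
      obtain ⟨cc, hbc, -⟩ := EReal.lt_iff_exists_real_btwn.mp hb
      have hM : (ENNReal.ofReal (max cc 0)) < ⨆ n, ⨆ i, ⨆ _ : i ∉ H, uIter P H n i := by
        rw [hU]; exact ENNReal.ofReal_lt_top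
      rw [lt_iSup_iff] at hM; obtain ⟨n, hM⟩ := hM
      refine ⟨n, ?_⟩
      rw [lt_iSup_iff] at hM; obtain ⟨i, hM⟩ := hM
      rw [lt_iSup_iff] at hM; obtain ⟨hi, hM⟩ := hM
      have hlt : max cc 0 < (uIter P H n i).toReal := by
        rw [← ENNReal.ofReal_lt_iff_lt_toReal (le_max_right cc 0) (hufin n i)]
        exact hM
      have hcy : cc < (uIter P H n i).toReal := lt_of_le_of_lt (le_max_left cc 0) hlt
      calc b < (cc : EReal) := hbc
        _ < (((uIter P H n i).toReal : ℝ) : EReal) := by exact_mod_cast hcy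
        _ ≤ ⨆ i, ⨆ _ : i ∉ H, (((uIter P H n i).toReal : ℝ) : EReal) :=
            le_iSup₂ (f := fun i (_ : i ∉ H) => (((uIter P H n i).toReal : ℝ) : EReal)) i hi
  · rintro ⟨y, hy1, hy2⟩
    by_contra hC
    have hmtop : ∀ i, dMoment P H 1 i ≠ ⊤ := fun i =>
      (lt_of_le_of_lt (le_iSup _ i) (lt_top_iff_ne_top.mpr hC)).ne
    set c : E → ℝ := fun i => (dMoment P H 1 i).toReal with hc
    have hc1 : ∀ i, 1 ≤ c i := by
      intro i
      have := ENNReal.toReal_mono (hmtop i) (one_le_moment P H hrec i)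
      simpa using this
    set h' : ℕ → E → ℝ := fun k i => (tailP P H k i).toReal with hh'
    have htfin : ∀ k (i : E), tailP P H k i ≠ ⊤ := fun k i =>
      (lt_of_le_of_lt (tail_le_one P H hrec k i) (by simp)).ne
    have hh'nn : ∀ k (i : E), 0 ≤ h' k i := fun k i => ENNReal.toReal_nonneg
    have key : ∀ n, ∀ i ∉ H, y n i ≤ c i := by
      intro n i hi
      obtain ⟨B, hB⟩ := (hy1 n).1
      set S : ℝ := max (sSup ((fun i => y n i - c i) '' {i | i ∉ H})) 0 with hS
      have hbdd : BddAbove ((fun i => y n i - c i) '' {i | i ∉ H}) := by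
        refine ⟨B, ?_⟩
        rintro r ⟨j, hj, rfl⟩
        have h1 : y n j ≤ B := hB ⟨j, hj, rfl⟩
        have h2 := hc1 j
        dsimp only
        linarith
      have hSmem : ∀ j, j ∉ H → y n j - c j ≤ S :=
        fun j hj => le_trans (le_csSup hbdd ⟨j, hj, rfl⟩) (le_max_left _ _)
      have hSnn : (0 : ℝ) ≤ S := le_max_right _ _
      have ind : ∀ k, ∀ j, j ∉ H → y n j ≤ c j + S * h' k j := by
        intro k
        induction k with
        | zero =>
          intro j hj
          have h0 : h' 0 j = 1 := by rw [hh']; simp [tail_zero P H hrec]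
          rw [h0, mul_one]
          linarith [hSmem j hj]
        | succ k ih =>
          intro j hj
          have hyineq := (hy1 n).2 j hj
          have hW1top : (∑' l, Qk P H j l * dMoment P H 1 l) ≠ ⊤ := by
            intro htop
            exact hmtop j (by rw [moment_eq P H hrec j, htop, add_top])
          have hW2top : (∑' l, Qk P H j l * tailP P H k l) ≠ ⊤ := by
            rw [← tail_succ]
            exact htfin (k + 1) j
          have hcW1 : c j = 1 + (∑' l, Qk P H j l * dMoment P H 1 l).toReal := by
            rw [hc]
            dsimp only
            rw [moment_eq P H hrec j, ENNReal.toReal_add (by simp) hW1top]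
            simp
          set g1 : E → ℝ := fun l => if l ∈ H then 0 else P j l * c l with hg1
          set g2 : E → ℝ := fun l => if l ∈ H then 0 else P j l * h' k l with hg2
          have hg1e : ∀ l, g1 l = (Qk P H j l * dMoment P H 1 l).toReal := by
            intro l
            by_cases hl : l ∈ H
            · simp [hg1, Qk, hl]
            · simp only [hg1, Qk, hl, if_false]
              rw [ENNReal.toReal_mul, ENNReal.toReal_ofReal (hP.1 j l)]
          have hg2e : ∀ l, g2 l = (Qk P H j l * tailP P H k l).toReal := by
            intro l
            by_cases hl : l ∈ H
            · simp [hg2, Qk, hl]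
            · simp only [hg2, Qk, hl, if_false]
              rw [ENNReal.toReal_mul, ENNReal.toReal_ofReal (hP.1 j l)]
          have hg1sum : Summable g1 :=
            (ENNReal.summable_toReal hW1top).congr fun l => (hg1e l).symm
          have hg2sum : Summable g2 :=
            (ENNReal.summable_toReal hW2top).congr fun l => (hg2e l).symm
          have htsum_g1 : ∑' l, g1 l = c j - 1 := by
            rw [tsum_congr hg1e,
              ← ENNReal.tsum_toReal_eq (fun l => ENNReal.ne_top_of_tsum_ne_top hW1top l)]
            rw [hcW1]
            ring
          have htsum_g2 : ∑' l, g2 l = h' (k + 1) j := by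
            rw [tsum_congr hg2e,
              ← ENNReal.tsum_toReal_eq (fun l => ENNReal.ne_top_of_tsum_ne_top hW2top l)]
            rw [hh']
            dsimp only
            rw [tail_succ]
          set g : E → ℝ := fun l => g1 l + S * g2 l with hg
          have hgsum : Summable g := hg1sum.add (hg2sum.mul_left S)
          have htsum_g : ∑' l, g l = (c j - 1) + S * h' (k + 1) j := by
            rw [hg]
            dsimp only
            rw [Summable.tsum_add hg1sum (hg2sum.mul_left S), tsum_mul_left, htsum_g1, htsum_g2]
          have hg10 : ∀ l, 0 ≤ g1 l := fun l => (hg1e l) ▸ ENNReal.toReal_nonneg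
          have hg20 : ∀ l, 0 ≤ g2 l := fun l => (hg2e l) ▸ ENNReal.toReal_nonneg
          have hg0 : ∀ l, 0 ≤ g l := fun l => add_nonneg (hg10 l) (mul_nonneg hSnn (hg20 l))
          set fy : E → ℝ := fun l => if l ∈ H then 0 else P j l * y n l with hfy
          have htfy : ∀ l, (if l ∈ H then 0 else (P j l : EReal) * (y n l : EReal))
              = ((fy l : ℝ) : EReal) := by
            intro l
            by_cases hl : l ∈ H
            · simp [hfy, hl]
            · simp [hfy, hl, EReal.coe_mul]
          have hfyg : ∀ l, fy l ≤ g l := by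
            intro l
            by_cases hl : l ∈ H
            · simp [hfy, hg, hg1, hg2, hl]
            · simp only [hfy, hg, hg1, hg2, hl, if_false]
              have h1 : P j l * y n l ≤ P j l * (c l + S * h' k l) :=
                mul_le_mul_of_nonneg_left (ih l hl) (hP.1 j l)
              nlinarith [h1]
          have hTle : (∑' l, if l ∈ H then 0 else (P j l : EReal) * (y n l : EReal))
              ≤ (((c j - 1) + S * h' (k + 1) j : ℝ) : EReal) := by
            rw [tsum_congr htfy]
            by_cases hts : Summable (fun l => ((fy l : ℝ) : EReal))
            · refine le_of_tendsto hts.hasSum (Filter.Eventually.of_forall fun s => ?_)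
              rw [ereal_finset_sum]
              have hle : ∑ l ∈ s, fy l ≤ (c j - 1) + S * h' (k + 1) j := by
                calc ∑ l ∈ s, fy l ≤ ∑ l ∈ s, g l := Finset.sum_le_sum fun l _ => hfyg l
                  _ ≤ ∑' l, g l := Summable.sum_le_tsum s (fun l _ => hg0 l) hgsum
                  _ = _ := htsum_g
              exact_mod_cast hle
            · rw [tsum_eq_zero_of_not_summable hts]
              have : (0 : ℝ) ≤ (c j - 1) + S * h' (k + 1) j := by
                have := hc1 j
                have := hh'nn (k + 1) j
                nlinarith
              exact_mod_cast this
          have hfinal : (y n j : EReal)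
              ≤ (((c j - 1) + S * h' (k + 1) j : ℝ) : EReal) + 1 :=
            le_trans hyineq (add_le_add_left hTle 1)
          have hreal : y n j ≤ ((c j - 1) + S * h' (k + 1) j) + 1 := by
            exact_mod_cast hfinal
          linarith
      have hlim : Filter.Tendsto (fun k => c i + S * h' k i) Filter.atTop (𝓝 (c i + S * 0)) := by
        refine Filter.Tendsto.const_add _ (Filter.Tendsto.const_mul _ ?_)
        have h1 : Filter.Tendsto (fun k => tailP P H k i) Filter.atTop (𝓝 0) := by
          have := ENNReal.tendsto_sum_nat_add (fun m => sigmaDist P H m i)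
            (by rw [hrec i]; simp)
          exact this
        have h2 := (ENNReal.tendsto_toReal (by simp : (0 : ℝ≥0∞) ≠ ⊤)).comp h1
        simpa [Function.comp_def, hh'] using h2
      have := ge_of_tendsto hlim (Filter.Eventually.of_forall fun k => ind k i hi)
      simpa using this
    have hbound : (⨆ n, ⨆ i, ⨆ _ : i ∉ H, (y n i : EReal))
        ≤ (((⨆ i, dMoment P H 1 i).toReal : ℝ) : EReal) := by
      refine iSup_le fun n => iSup_le fun i => iSup_le fun hi => ?_
      have h1 : y n i ≤ c i := key n i hi
      have h2 : c i ≤ (⨆ i, dMoment P H 1 i).toReal :=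
        ENNReal.toReal_mono hC (le_iSup _ i)
      exact_mod_cast h1.trans h2
    rw [hy2] at hbound
    exact EReal.coe_ne_top _ (top_le_iff.mp hbound)
end
end

section
/- Let P be an irreducible aperiodic stochastic matrix on a countable set E whose chain is recurrent, let H be a nonempty finite subset of E, and suppose the chain is ℓ-ergodic for some integer ℓ ≥ 0. Then the chain is not (ℓ+1)-ergodic if and only if there exists a sequence of functions y⁽ⁿ⁾ : E → ℝ (n ≥ 1) such that: (1) for each n, sup_{i∈E} y⁽ⁿ⁾(i) < ∞ and y⁽ⁿ⁾(i) ≤ Σ_{j∉H} P(i,j)·y⁽ⁿ⁾(j) + 𝔼_i σ_H^ℓ for every i ∈ E; and (2) sup_{n≥1} max_{i∈H} y⁽ⁿ⁾(i) = ∞. -/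
open scoped ENNReal NNReal BigOperators Classical Topology
open Filter Set

noncomputable section

namespace ErgAux

variable {E : Type*} (P : E → E → ℝ) (H : Set E)

/-- The taboo transition operator. -/
def QE (f : E → ℝ≥0∞) (i : E) : ℝ≥0∞ :=
  ∑' j, if j ∈ H then 0 else ENNReal.ofReal (P i j) * f j

lemma sigmaDist_succ (n : ℕ) : sigmaDist P H (n + 1) = QE P H (sigmaDist P H n) := rfl

lemma QE_mono {f g : E → ℝ≥0∞} (h : ∀ j, f j ≤ g j) (i : E) :
    QE P H f i ≤ QE P H g i := by
  refine ENNReal.tsum_le_tsum fun j => ?_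
  split_ifs with hj
  · exact le_rfl
  · exact mul_le_mul_right (h j) _

lemma QE_add (f g : E → ℝ≥0∞) (i : E) :
    QE P H (fun j => f j + g j) i = QE P H f i + QE P H g i := by
  rw [QE, QE, QE, ← ENNReal.tsum_add]
  refine tsum_congr fun j => ?_
  split_ifs with hj
  · simp
  · rw [mul_add]

lemma QE_mul_const (C : ℝ≥0∞) (f : E → ℝ≥0∞) (i : E) :
    QE P H (fun j => C * f j) i = C * QE P H f i := by
  rw [QE, QE, ← ENNReal.tsum_mul_left]
  refine tsum_congr fun j => ?_
  split_ifs with hj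
  · simp
  · rw [mul_left_comm]

lemma QE_sum {ι : Type*} (s : Finset ι) (f : ι → E → ℝ≥0∞) (i : E) :
    QE P H (fun j => ∑ k ∈ s, f k j) i = ∑ k ∈ s, QE P H (f k) i := by
  classical
  induction s using Finset.induction_on with
  | empty => simp [QE]
  | @insert a s ha ih =>
    simp only [Finset.sum_insert ha]
    rw [QE_add, ih]

lemma QE_iter_mono {f g : E → ℝ≥0∞} (h : ∀ j, f j ≤ g j) (k : ℕ) (i : E) :
    (QE P H)^[k] f i ≤ (QE P H)^[k] g i := by
  induction k generalizing f g i with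
  | zero => exact h i
  | succ k ih =>
    rw [Function.iterate_succ_apply, Function.iterate_succ_apply]
    exact ih (fun j => QE_mono P H h j) i

lemma QE_iter_add (f g : E → ℝ≥0∞) (k : ℕ) (i : E) :
    (QE P H)^[k] (fun j => f j + g j) i = (QE P H)^[k] f i + (QE P H)^[k] g i := by
  induction k generalizing f g i with
  | zero => rfl
  | succ k ih =>
    rw [Function.iterate_succ_apply, Function.iterate_succ_apply,
      Function.iterate_succ_apply]
    have : QE P H (fun j => f j + g j) = fun j => QE P H f j + QE P H g j :=
      funext fun j => QE_add P H f g j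
    rw [this]
    exact ih _ _ i

lemma QE_iter_mul_const (C : ℝ≥0∞) (f : E → ℝ≥0∞) (k : ℕ) (i : E) :
    (QE P H)^[k] (fun j => C * f j) i = C * (QE P H)^[k] f i := by
  induction k generalizing f i with
  | zero => rfl
  | succ k ih =>
    rw [Function.iterate_succ_apply, Function.iterate_succ_apply]
    have : QE P H (fun j => C * f j) = fun j => C * QE P H f j :=
      funext fun j => QE_mul_const P H C f j
    rw [this]
    exact ih _ i

/-- Shifted weighted sums of the return-time distribution. -/
def SD (c : ℕ → ℝ≥0∞) (k : ℕ) (i : E) : ℝ≥0∞ := ∑' m, c m * sigmaDist P H (m + k) i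

lemma QE_SD (c : ℕ → ℝ≥0∞) (k : ℕ) (i : E) :
    QE P H (SD P H c k) i = SD P H c (k + 1) i := by
  rw [QE]
  have h1 : ∀ j : E, (if j ∈ H then 0 else ENNReal.ofReal (P i j) * SD P H c k j)
      = ∑' m, (if j ∈ H then 0
          else c m * (ENNReal.ofReal (P i j) * sigmaDist P H (m + k) j)) := by
    intro j
    split_ifs with hj
    · simp
    · rw [SD, ← ENNReal.tsum_mul_left]
      exact tsum_congr fun m => mul_left_comm _ _ _
  rw [tsum_congr h1, ENNReal.tsum_comm]
  refine tsum_congr fun m => ?_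
  have h2 : ∀ j : E, (if j ∈ H then 0
      else c m * (ENNReal.ofReal (P i j) * sigmaDist P H (m + k) j))
      = c m * (if j ∈ H then 0 else ENNReal.ofReal (P i j) * sigmaDist P H (m + k) j) := by
    intro j; split_ifs <;> simp
  rw [tsum_congr h2, ENNReal.tsum_mul_left]
  have : (∑' j, (if j ∈ H then 0 else ENNReal.ofReal (P i j) * sigmaDist P H (m + k) j))
      = sigmaDist P H (m + k + 1) i := rfl
  rw [this]
  rfl

lemma QE_iter_SD (c : ℕ → ℝ≥0∞) (k : ℕ) :
    (QE P H)^[k] (SD P H c 0) = SD P H c k := by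
  induction k with
  | zero => rfl
  | succ k ih =>
    rw [Function.iterate_succ_apply', ih]
    exact funext fun i => QE_SD P H c k i

lemma dMoment_eq_SD (l : ℕ) :
    dMoment P H l = SD P H (fun m => ((m + 1 : ℕ) : ℝ≥0∞) ^ l) 0 := rfl

lemma SD_one_zero (hrec : DRecurrent P H) (i : E) :
    SD P H (fun _ => 1) 0 i = 1 := by
  rw [SD]
  simp only [one_mul]
  exact hrec i

lemma SD_eq (c : ℕ → ℝ≥0∞) (k : ℕ) (i : E) :
    SD P H c k i = ∑' r, if k ≤ r then c (r - k) * sigmaDist P H r i else 0 := by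
  have hinj : Function.Injective (fun m : ℕ => m + k) := fun a b h => by simpa using h
  have hsupp : Function.support
        (fun r => if k ≤ r then c (r - k) * sigmaDist P H r i else 0)
      ⊆ Set.range (fun m : ℕ => m + k) := by
    intro r hr
    by_cases h : k ≤ r
    · exact ⟨r - k, by simp; omega⟩
    · simp [h] at hr
  rw [SD, ← hinj.tsum_eq hsupp]
  refine tsum_congr fun m => ?_
  simp [Nat.le_add_left]

lemma SD_one_le_one (hrec : DRecurrent P H) (k : ℕ) (i : E) :
    SD P H (fun _ => 1) k i ≤ 1 := by
  rw [SD_eq]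
  calc (∑' r, if k ≤ r then (1 : ℝ≥0∞) * sigmaDist P H r i else 0)
      ≤ ∑' r, sigmaDist P H r i := by
        refine ENNReal.tsum_le_tsum fun r => ?_
        split_ifs with h
        · rw [one_mul]
        · exact zero_le
    _ = 1 := hrec i

lemma iter_one (hrec : DRecurrent P H) (k : ℕ) :
    (QE P H)^[k] (fun _ => (1 : ℝ≥0∞)) = SD P H (fun _ => 1) k := by
  have h0 : (fun _ : E => (1 : ℝ≥0∞)) = SD P H (fun _ => 1) 0 :=
    funext fun i => (SD_one_zero P H hrec i).symm
  rw [h0, QE_iter_SD]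

/-- The coefficients `T r = ∑_{m ≤ r} (m+1)^l` (natural number version). -/
def natT (l r : ℕ) : ℕ := ∑ m ∈ Finset.range (r + 1), (m + 1) ^ l

lemma natT_le (l r : ℕ) : natT l r ≤ (r + 1) ^ (l + 1) := by
  calc natT l r ≤ ∑ _m ∈ Finset.range (r + 1), (r + 1) ^ l := by
        refine Finset.sum_le_sum fun m hm => ?_
        exact Nat.pow_le_pow_left (by simp at hm; omega) l
    _ = (r + 1) * (r + 1) ^ l := by rw [Finset.sum_const, Finset.card_range, smul_eq_mul]
    _ = (r + 1) ^ (l + 1) := by ring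

lemma natT_ge (l r : ℕ) : (r + 1) ^ (l + 1) ≤ 2 ^ (l + 1) * natT l r := by
  set N := r + 1 with hN
  set h := N / 2 with hh
  have hsub : Finset.Ico h N ⊆ Finset.range N := by
    rw [Finset.range_eq_Ico]
    exact Finset.Ico_subset_Ico (Nat.zero_le _) le_rfl
  have h2 : (N - h) * (h + 1) ^ l ≤ natT l r := by
    calc (N - h) * (h + 1) ^ l = ∑ _m ∈ Finset.Ico h N, (h + 1) ^ l := by
          rw [Finset.sum_const, Nat.card_Ico, smul_eq_mul]
      _ ≤ ∑ m ∈ Finset.Ico h N, (m + 1) ^ l := by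
          refine Finset.sum_le_sum fun m hm => ?_
          exact Nat.pow_le_pow_left (by simp [Finset.mem_Ico] at hm; omega) l
      _ ≤ natT l r := Finset.sum_le_sum_of_subset hsub
  calc N ^ (l + 1) = N * N ^ l := by ring
    _ ≤ (2 * (N - h)) * (2 * (h + 1)) ^ l := by
        refine Nat.mul_le_mul (by omega) (Nat.pow_le_pow_left (by omega) l)
    _ = 2 ^ (l + 1) * ((N - h) * (h + 1) ^ l) := by rw [mul_pow]; ring
    _ ≤ 2 ^ (l + 1) * natT l r := Nat.mul_le_mul_left _ h2

/-- The representation of `∑' k, QE^[k] (dMoment l) i` as `∑' r, T r * sigmaDist r i`. -/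
lemma z_rep (l : ℕ) (i : E) :
    (∑' k, (QE P H)^[k] (dMoment P H l) i)
      = ∑' r, ((natT l r : ℕ) : ℝ≥0∞) * sigmaDist P H r i := by
  have hc : ∀ k, (QE P H)^[k] (dMoment P H l) i
      = SD P H (fun m => ((m + 1 : ℕ) : ℝ≥0∞) ^ l) k i := by
    intro k
    rw [dMoment_eq_SD, QE_iter_SD]
  calc (∑' k, (QE P H)^[k] (dMoment P H l) i)
      = ∑' k, ∑' r, (if k ≤ r then ((r - k + 1 : ℕ) : ℝ≥0∞) ^ l * sigmaDist P H r i
          else 0) := by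
        refine tsum_congr fun k => ?_
        rw [hc k, SD_eq]
    _ = ∑' r, ∑' k, (if k ≤ r then ((r - k + 1 : ℕ) : ℝ≥0∞) ^ l * sigmaDist P H r i
          else 0) := ENNReal.tsum_comm
    _ = ∑' r, ((natT l r : ℕ) : ℝ≥0∞) * sigmaDist P H r i := by
        refine tsum_congr fun r => ?_
        rw [tsum_eq_sum (s := Finset.range (r + 1))
          (fun k hk => by rw [if_neg]; simp at hk; omega)]
        have : ∀ k ∈ Finset.range (r + 1),
            (if k ≤ r then ((r - k + 1 : ℕ) : ℝ≥0∞) ^ l * sigmaDist P H r i else 0)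
              = ((r - k + 1 : ℕ) : ℝ≥0∞) ^ l * sigmaDist P H r i := by
          intro k hk
          rw [if_pos (by simp at hk; omega)]
        rw [Finset.sum_congr rfl this, ← Finset.sum_mul]
        congr 1
        have h5 := Finset.sum_range_reflect (fun m => ((m + 1 : ℕ) : ℝ≥0∞) ^ l) (r + 1)
        simp only [Nat.add_sub_cancel] at h5
        rw [h5, natT, Nat.cast_sum]
        exact Finset.sum_congr rfl fun m _ => by push_cast; ring

lemma z_le_moment (l : ℕ) (i : E) :
    (∑' k, (QE P H)^[k] (dMoment P H l) i) ≤ dMoment P H (l + 1) i := by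
  rw [z_rep, dMoment]
  refine ENNReal.tsum_le_tsum fun r => ?_
  refine mul_le_mul_left ?_ _
  have := natT_le l r
  calc ((natT l r : ℕ) : ℝ≥0∞) ≤ (((r + 1) ^ (l + 1) : ℕ) : ℝ≥0∞) := by
        exact_mod_cast this
    _ = ((r + 1 : ℕ) : ℝ≥0∞) ^ (l + 1) := by push_cast; ring

lemma moment_le_z (l : ℕ) (i : E) :
    dMoment P H (l + 1) i ≤ 2 ^ (l + 1) * ∑' k, (QE P H)^[k] (dMoment P H l) i := by
  rw [z_rep, dMoment, ← ENNReal.tsum_mul_left]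
  refine ENNReal.tsum_le_tsum fun r => ?_
  rw [← mul_assoc]
  refine mul_le_mul_left ?_ _
  have := natT_ge l r
  calc ((r + 1 : ℕ) : ℝ≥0∞) ^ (l + 1) = (((r + 1) ^ (l + 1) : ℕ) : ℝ≥0∞) := by
        push_cast; ring
    _ ≤ ((2 ^ (l + 1) * natT l r : ℕ) : ℝ≥0∞) := by exact_mod_cast this
    _ = 2 ^ (l + 1) * ((natT l r : ℕ) : ℝ≥0∞) := by push_cast; ring

lemma le_iter (u : E → ℝ≥0∞) (g : E → ℝ≥0∞)
    (hu : ∀ i, u i ≤ QE P H u i + g i) (n : ℕ) (i : E) :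
    u i ≤ (QE P H)^[n] u i + ∑ k ∈ Finset.range n, (QE P H)^[k] g i := by
  induction n with
  | zero => simp
  | succ n ih =>
    have h2 : (QE P H)^[n] u i ≤ (QE P H)^[n + 1] u i + (QE P H)^[n] g i := by
      have h3 := QE_iter_mono P H (f := u) (g := fun j => QE P H u j + g j) hu n i
      rwa [QE_iter_add, ← Function.iterate_succ_apply] at h3
    calc u i ≤ (QE P H)^[n] u i + ∑ k ∈ Finset.range n, (QE P H)^[k] g i := ih
      _ ≤ ((QE P H)^[n + 1] u i + (QE P H)^[n] g i)
          + ∑ k ∈ Finset.range n, (QE P H)^[k] g i := add_le_add_left h2 _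
      _ = (QE P H)^[n + 1] u i + ∑ k ∈ Finset.range (n + 1), (QE P H)^[k] g i := by
          rw [Finset.sum_range_succ]; ring

lemma u_le_z (hrec : DRecurrent P H) (l : ℕ) (u : E → ℝ≥0∞) (C : ℝ≥0∞) (hC : C ≠ ⊤)
    (huC : ∀ i, u i ≤ C)
    (hu : ∀ i, u i ≤ QE P H u i + dMoment P H l i) (i : E) :
    u i ≤ ∑' k, (QE P H)^[k] (dMoment P H l) i := by
  refine ENNReal.le_of_forall_pos_le_add fun ε hε hlt => ?_
  have htail : Tendsto (fun n => SD P H (fun _ => 1) n i) atTop (𝓝 0) := by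
    have h1 : ∀ n : ℕ, SD P H (fun _ => 1) n i = ∑' m, sigmaDist P H (m + n) i := by
      intro n; rw [SD]; exact tsum_congr fun m => one_mul _
    simp only [h1]
    exact ENNReal.tendsto_sum_nat_add _ (by rw [hrec i]; exact ENNReal.one_ne_top)
  have htt : Tendsto (fun n => C * SD P H (fun _ => 1) n i) atTop (𝓝 0) := by
    have h0 : Tendsto (fun n => C * SD P H (fun _ => 1) n i) atTop (𝓝 (C * 0)) :=
      ENNReal.Tendsto.const_mul htail (Or.inr hC)
    rwa [mul_zero] at h0
  have hev : ∀ᶠ n in atTop, C * SD P H (fun _ => 1) n i < ε :=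
    htt.eventually (gt_mem_nhds (by exact_mod_cast ENNReal.coe_pos.mpr hε))
  obtain ⟨n, hn⟩ := hev.exists
  have hQn : (QE P H)^[n] u i ≤ C * SD P H (fun _ => 1) n i := by
    calc (QE P H)^[n] u i ≤ (QE P H)^[n] (fun _ => C) i :=
          QE_iter_mono P H (fun j => huC j) n i
      _ = (QE P H)^[n] (fun j => C * (fun _ : E => (1 : ℝ≥0∞)) j) i := by
          simp
      _ = C * (QE P H)^[n] (fun _ => (1 : ℝ≥0∞)) i := QE_iter_mul_const P H C _ n i
      _ = C * SD P H (fun _ => 1) n i := by rw [iter_one P H hrec]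
  calc u i ≤ (QE P H)^[n] u i + ∑ k ∈ Finset.range n, (QE P H)^[k] (dMoment P H l) i :=
        le_iter P H u _ hu n i
    _ ≤ C * SD P H (fun _ => 1) n i + ∑' k, (QE P H)^[k] (dMoment P H l) i :=
        add_le_add hQn (ENNReal.sum_le_tsum _)
    _ ≤ (∑' k, (QE P H)^[k] (dMoment P H l) i) + ε := by
        rw [add_comm]
        exact add_le_add_right hn.le _

/-- The coercion `ℝ≥0∞ → EReal` as an additive monoid hom. -/
def ennrealToEReal : ℝ≥0∞ →+ EReal :=
  ⟨⟨(fun x => (x : EReal)), EReal.coe_ennreal_zero⟩, EReal.coe_ennreal_add⟩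

lemma ereal_tsum_coe {ι : Type*} (h : ι → ℝ≥0∞) :
    (∑' j, ((h j : ℝ≥0∞) : EReal)) = ((∑' j, h j : ℝ≥0∞) : EReal) :=
  ((ENNReal.summable (f := h)).hasSum.map ennrealToEReal
    continuous_coe_ennreal_ereal).tsum_eq

lemma ereal_tsum_le_coe {ι : Type*} (f : ι → EReal) (h : ι → ℝ≥0∞)
    (hfh : ∀ j, f j ≤ (h j : EReal)) :
    (∑' j, f j) ≤ ((∑' j, h j : ℝ≥0∞) : EReal) := by
  by_cases hs : Summable f
  · refine le_of_tendsto hs.hasSum (Filter.Eventually.of_forall fun s => ?_)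
    calc (∑ j ∈ s, f j) ≤ ∑ j ∈ s, ((h j : ℝ≥0∞) : EReal) :=
          Finset.sum_le_sum fun j _ => hfh j
      _ = ((∑ j ∈ s, h j : ℝ≥0∞) : EReal) := (map_sum ennrealToEReal h s).symm
      _ ≤ ((∑' j, h j : ℝ≥0∞) : EReal) :=
          EReal.coe_ennreal_le_coe_ennreal_iff.mpr (ENNReal.sum_le_tsum s)
  · rw [tsum_eq_zero_of_not_summable hs]
    exact EReal.coe_ennreal_nonneg _

lemma coe_mul_le_coe_ennreal (p x : ℝ) (hp : 0 ≤ p) :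
    (p : EReal) * (x : EReal) ≤ ((ENNReal.ofReal p * ENNReal.ofReal x : ℝ≥0∞) : EReal) := by
  rw [← ENNReal.ofReal_mul hp, EReal.coe_ennreal_ofReal, ← EReal.coe_mul]
  exact le_max_left ((p * x : ℝ) : EReal) 0

lemma coe_mul_eq_coe_ennreal (p x : ℝ) (hp : 0 ≤ p) (hx : 0 ≤ x) :
    (p : EReal) * (x : EReal) = ((ENNReal.ofReal p * ENNReal.ofReal x : ℝ≥0∞) : EReal) := by
  rw [← ENNReal.ofReal_mul hp, EReal.coe_ennreal_ofReal, ← EReal.coe_mul,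
    max_eq_left (mul_nonneg hp hx)]

lemma ofReal_le_of_ereal_le {x : ℝ} {a : ℝ≥0∞} (h : (x : EReal) ≤ (a : EReal)) :
    ENNReal.ofReal x ≤ a := by
  rw [← EReal.coe_ennreal_le_coe_ennreal_iff, EReal.coe_ennreal_ofReal]
  exact max_le h (EReal.coe_ennreal_nonneg a)

lemma coe_toReal_ereal {a : ℝ≥0∞} (ha : a ≠ ⊤) : ((a.toReal : ℝ) : EReal) = (a : EReal) := by
  conv_rhs => rw [← ENNReal.ofReal_toReal ha]
  rw [EReal.coe_ennreal_ofReal, max_eq_left ENNReal.toReal_nonneg]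

lemma tsum_iSup_mono {ι : Type*} (f : ℕ → ι → ℝ≥0∞) (hf : ∀ j, Monotone fun m => f m j) :
    (∑' j, ⨆ m, f m j) = ⨆ m, ∑' j, f m j := by
  calc (∑' j, ⨆ m, f m j) = ⨆ s : Finset ι, ∑ j ∈ s, ⨆ m, f m j :=
        ENNReal.tsum_eq_iSup_sum
    _ = ⨆ s : Finset ι, ⨆ m, ∑ j ∈ s, f m j :=
        iSup_congr fun s => ENNReal.finsetSum_iSup_of_monotone fun j => hf j
    _ = ⨆ m, ⨆ s : Finset ι, ∑ j ∈ s, f m j := iSup_comm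
    _ = ⨆ m, ∑' j, f m j := iSup_congr fun m => ENNReal.tsum_eq_iSup_sum.symm

lemma QE_iSup_mono (f : ℕ → E → ℝ≥0∞) (hf : ∀ j, Monotone fun m => f m j) (i : E) :
    QE P H (fun j => ⨆ m, f m j) i = ⨆ m, QE P H (f m) i := by
  rw [QE]
  have h1 : ∀ j : E, (if j ∈ H then 0 else ENNReal.ofReal (P i j) * ⨆ m, f m j)
      = ⨆ m, (if j ∈ H then 0 else ENNReal.ofReal (P i j) * f m j) := by
    intro j
    split_ifs with hj
    · simp
    · rw [ENNReal.mul_iSup]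
  rw [tsum_congr h1]
  exact tsum_iSup_mono _ fun j a b hab => by
    split_ifs with hj
    · exact le_rfl
    · exact mul_le_mul_right (hf j hab) _

lemma QE_iter_iSup (f : ℕ → E → ℝ≥0∞) (hf : ∀ j, Monotone fun m => f m j) (k : ℕ) (i : E) :
    (QE P H)^[k] (fun j => ⨆ m, f m j) i = ⨆ m, (QE P H)^[k] (f m) i := by
  induction k generalizing f i with
  | zero => rfl
  | succ k ih =>
    rw [Function.iterate_succ_apply]
    have h1 : QE P H (fun j => ⨆ m, f m j) = fun j => ⨆ m, QE P H (f m) j :=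
      funext fun j => QE_iSup_mono P H f hf j
    rw [h1, ih (fun m => QE P H (f m))
      (fun j a b hab => QE_mono P H (fun j' => hf j' hab) j)]
    exact iSup_congr fun m => by rw [← Function.iterate_succ_apply]

lemma z_propagate (l : ℕ) (a b : E) (hab : 0 < P a b) (hb : b ∉ H)
    (hzb : (∑' k, (QE P H)^[k] (dMoment P H l) b) = ⊤) :
    (∑' k, (QE P H)^[k] (dMoment P H l) a) = ⊤ := by
  rw [z_rep] at hzb ⊢
  have hs : ∀ m, ENNReal.ofReal (P a b) * sigmaDist P H m b ≤ sigmaDist P H (m + 1) a := by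
    intro m
    have h1 : sigmaDist P H (m + 1) a
        = ∑' j, if j ∈ H then 0 else ENNReal.ofReal (P a j) * sigmaDist P H m j := rfl
    rw [h1]
    have h2 := ENNReal.le_tsum
      (f := fun j => if j ∈ H then 0 else ENNReal.ofReal (P a j) * sigmaDist P H m j) b
    simpa [hb] using h2
  have hT : ∀ r : ℕ, ((natT l r : ℕ) : ℝ≥0∞) ≤ ((natT l (r + 1) : ℕ) : ℝ≥0∞) := by
    intro r
    refine Nat.cast_le.mpr ?_
    exact Finset.sum_le_sum_of_subset (Finset.range_subset_range.mpr (by omega))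
  have key : ENNReal.ofReal (P a b) * (∑' r, ((natT l r : ℕ) : ℝ≥0∞) * sigmaDist P H r b)
      ≤ ∑' r, ((natT l r : ℕ) : ℝ≥0∞) * sigmaDist P H r a := by
    rw [← ENNReal.tsum_mul_left]
    calc (∑' r, ENNReal.ofReal (P a b) * (((natT l r : ℕ) : ℝ≥0∞) * sigmaDist P H r b))
        ≤ ∑' r, ((natT l (r + 1) : ℕ) : ℝ≥0∞) * sigmaDist P H (r + 1) a := by
          refine ENNReal.tsum_le_tsum fun r => ?_
          rw [mul_left_comm]
          exact mul_le_mul' (hT r) (hs r)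
      _ ≤ ∑' r, ((natT l r : ℕ) : ℝ≥0∞) * sigmaDist P H r a := by
          rw [tsum_eq_zero_add'
            (f := fun r => ((natT l r : ℕ) : ℝ≥0∞) * sigmaDist P H r a)
            ENNReal.summable]
          exact le_add_self
  rw [hzb, ENNReal.mul_top (by simpa using (ENNReal.ofReal_pos.mpr hab).ne')] at key
  exact top_le_iff.mp key

lemma exists_H_top (l : ℕ) {h₀ : E} (hh₀ : h₀ ∈ H) :
    ∀ i, Relation.TransGen (fun a b => 0 < P a b) h₀ i →
      (∑' k, (QE P H)^[k] (dMoment P H l) i) = ⊤ →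
      ∃ h ∈ H, (∑' k, (QE P H)^[k] (dMoment P H l) h) = ⊤ := by
  intro i hti
  induction hti with
  | @single b hab =>
    intro htop
    by_cases hbH : b ∈ H
    · exact ⟨b, hbH, htop⟩
    · exact ⟨h₀, hh₀, z_propagate P H l h₀ b hab hbH htop⟩
  | @tail c b _ hcb ih =>
    intro htop
    by_cases hbH : b ∈ H
    · exact ⟨b, hbH, htop⟩
    · exact ih (z_propagate P H l c b hcb hbH htop)

/-- Truncation of the `l`-th moment at level `n`. -/
def gtr (l n : ℕ) (j : E) : ℝ≥0∞ := min (dMoment P H l j) (n : ℝ≥0∞)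

/-- The approximating test functions. -/
def vfun (l n : ℕ) (i : E) : ℝ≥0∞ :=
  ∑ k ∈ Finset.range n, (QE P H)^[k] (gtr P H l n) i

lemma vfun_le (hrec : DRecurrent P H) (l n : ℕ) (i : E) :
    vfun P H l n i ≤ (n : ℝ≥0∞) * n := by
  have hterm : ∀ k, (QE P H)^[k] (gtr P H l n) i ≤ (n : ℝ≥0∞) := by
    intro k
    calc (QE P H)^[k] (gtr P H l n) i
        ≤ (QE P H)^[k] (fun j => (n : ℝ≥0∞) * (fun _ : E => (1 : ℝ≥0∞)) j) i := by
          refine QE_iter_mono P H (fun j => ?_) k i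
          simpa [gtr] using min_le_right (dMoment P H l j) ((n : ℕ) : ℝ≥0∞)
      _ = (n : ℝ≥0∞) * (QE P H)^[k] (fun _ => (1 : ℝ≥0∞)) i :=
          QE_iter_mul_const P H _ _ k i
      _ ≤ (n : ℝ≥0∞) * 1 := by
          rw [iter_one P H hrec]
          exact mul_le_mul_right (SD_one_le_one P H hrec k i) _
      _ = (n : ℝ≥0∞) := mul_one _
  calc vfun P H l n i ≤ ∑ _k ∈ Finset.range n, (n : ℝ≥0∞) :=
        Finset.sum_le_sum fun k _ => hterm k
    _ = (n : ℝ≥0∞) * n := by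
        rw [Finset.sum_const, Finset.card_range, nsmul_eq_mul]

lemma vfun_ne_top (hrec : DRecurrent P H) (l n : ℕ) (i : E) :
    vfun P H l n i ≠ ⊤ :=
  ne_top_of_le_ne_top (ENNReal.mul_ne_top (ENNReal.natCast_ne_top n)
    (ENNReal.natCast_ne_top n)) (vfun_le P H hrec l n i)

lemma vfun_subsol (l n : ℕ) (i : E) :
    vfun P H l n i ≤ QE P H (vfun P H l n) i + dMoment P H l i := by
  cases n with
  | zero => simp [vfun]
  | succ m =>
    have h1 : vfun P H l (m + 1) i
        = (∑ k ∈ Finset.range m, (QE P H)^[k + 1] (gtr P H l (m + 1)) i)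
            + gtr P H l (m + 1) i := by
      rw [vfun, Finset.sum_range_succ']
      rfl
    have h2 : (∑ k ∈ Finset.range m, (QE P H)^[k + 1] (gtr P H l (m + 1)) i)
        = QE P H (fun j => ∑ k ∈ Finset.range m, (QE P H)^[k] (gtr P H l (m + 1)) j) i := by
      rw [QE_sum]
      exact Finset.sum_congr rfl fun k _ => by rw [Function.iterate_succ_apply']
    rw [h1, h2]
    refine add_le_add ?_ (min_le_left _ _)
    refine QE_mono P H (fun j => ?_) i
    exact Finset.sum_le_sum_of_subset (Finset.range_subset_range.mpr (Nat.le_succ m))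

lemma vfun_sup_eq_top (l : ℕ) (hlerg : ∀ i, dMoment P H l i ≠ ⊤) (h : E)
    (hz : (∑' k, (QE P H)^[k] (dMoment P H l) h) = ⊤) :
    (⨆ n, vfun P H l n h) = ⊤ := by
  rw [iSup_eq_top]
  intro c hc
  have hmono : ∀ j : E, Monotone fun m : ℕ => gtr P H l m j := by
    intro j a b hab
    exact min_le_min le_rfl (Nat.cast_le.mpr hab)
  have h1 : (⨆ N, ∑ k ∈ Finset.range N, (QE P H)^[k] (dMoment P H l) h) = ⊤ := by
    rw [← ENNReal.tsum_eq_iSup_nat, hz]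
  obtain ⟨N, hN⟩ := iSup_eq_top.mp h1 c hc
  have h2 : ∀ k, (⨆ m : ℕ, (QE P H)^[k] (gtr P H l m) h)
      = (QE P H)^[k] (dMoment P H l) h := by
    intro k
    have hfeq : (fun j : E => ⨆ m : ℕ, gtr P H l m j) = dMoment P H l := by
      funext j
      refine le_antisymm (iSup_le fun m => min_le_left _ _) ?_
      obtain ⟨m, hm⟩ := ENNReal.exists_nat_gt (hlerg j)
      exact le_trans (le_of_eq (min_eq_left hm.le).symm)
        (le_iSup (fun m : ℕ => gtr P H l m j) m)
    rw [← QE_iter_iSup P H _ hmono k h, hfeq]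
  have h3 : (⨆ m : ℕ, ∑ k ∈ Finset.range N, (QE P H)^[k] (gtr P H l m) h)
      = ∑ k ∈ Finset.range N, (QE P H)^[k] (dMoment P H l) h := by
    rw [← ENNReal.finsetSum_iSup_of_monotone
      (fun k a b hab => QE_iter_mono P H (fun j => hmono j hab) k h)]
    exact Finset.sum_congr rfl fun k _ => h2 k
  obtain ⟨m, hm⟩ : ∃ m : ℕ, c < ∑ k ∈ Finset.range N, (QE P H)^[k] (gtr P H l m) h := by
    rw [← h3] at hN
    exact lt_iSup_iff.mp hN
  refine ⟨max N m, lt_of_lt_of_le hm ?_⟩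
  calc (∑ k ∈ Finset.range N, (QE P H)^[k] (gtr P H l m) h)
      ≤ ∑ k ∈ Finset.range (max N m), (QE P H)^[k] (gtr P H l m) h :=
        Finset.sum_le_sum_of_subset (Finset.range_subset_range.mpr (le_max_left _ _))
    _ ≤ ∑ k ∈ Finset.range (max N m), (QE P H)^[k] (gtr P H l (max N m)) h :=
        Finset.sum_le_sum fun k _ =>
          QE_iter_mono P H (fun j => hmono j (le_max_right N m)) k h
    _ = vfun P H l (max N m) h := rfl

end ErgAux

open ErgAux in
/-- Inverse problem criterion for algebraic ergodicity of a discrete-time Markov chain. -/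
theorem discrete_not_succ_ergodic_iff_test_sequence {E : Type*} [Countable E]
    (P : E → E → ℝ) (H : Set E) (l : ℕ)
    (hP : IsStochastic P) (hirr : MatIrreducible P) (hap : MatAperiodic P)
    (hrec : DRecurrent P H) (hHne : H.Nonempty) (hHfin : H.Finite)
    (hlerg : ∀ i, dMoment P H l i ≠ ⊤) :
    (¬ ∀ i, dMoment P H (l + 1) i ≠ ⊤) ↔
      ∃ y : ℕ → E → ℝ,
        (∀ n : ℕ, BddAbove (Set.range (y n)) ∧
          ∀ i : E, (y n i : EReal) ≤
            (∑' j : E, if j ∈ H then 0 else (P i j : EReal) * (y n j : EReal))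
              + (dMoment P H l i : EReal)) ∧
        (⨆ n : ℕ, ⨆ i ∈ H, (y n i : EReal)) = ⊤ := by
  constructor
  · -- forward direction: construct the test sequence
    intro hnot
    push_neg at hnot
    obtain ⟨i₀, hi₀⟩ := hnot
    have hz₀ : (∑' k, (QE P H)^[k] (dMoment P H l) i₀) = ⊤ := by
      have hle := moment_le_z P H l i₀
      rw [hi₀, top_le_iff] at hle
      rcases ENNReal.mul_eq_top.mp hle with ⟨-, h⟩ | ⟨h, -⟩
      · exact h
      · exact absurd h (ENNReal.pow_ne_top ENNReal.ofNat_ne_top)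
    obtain ⟨h, hH, hzh⟩ : ∃ h ∈ H, (∑' k, (QE P H)^[k] (dMoment P H l) h) = ⊤ := by
      by_cases hiH : i₀ ∈ H
      · exact ⟨i₀, hiH, hz₀⟩
      · obtain ⟨h₀, hh₀⟩ := hHne
        exact exists_H_top P H l hh₀ i₀ (hirr h₀ i₀ fun e => hiH (e ▸ hh₀)) hz₀
    refine ⟨fun n i => (vfun P H l n i).toReal, fun n => ⟨?_, ?_⟩, ?_⟩
    · -- bounded above
      refine ⟨(n : ℝ) * n, ?_⟩
      rintro x ⟨i, rfl⟩
      have h1 := vfun_le P H hrec l n i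
      calc (vfun P H l n i).toReal
          ≤ ((n : ℝ≥0∞) * n).toReal := ENNReal.toReal_mono
            (ENNReal.mul_ne_top (ENNReal.natCast_ne_top n) (ENNReal.natCast_ne_top n)) h1
        _ = (n : ℝ) * n := by
            simp [ENNReal.toReal_mul]
    · -- the pointwise inequality
      intro i
      have hterm : ∀ j : E,
          (if j ∈ H then 0
            else (P i j : EReal) * (((vfun P H l n j).toReal : ℝ) : EReal))
          = (((if j ∈ H then 0 else ENNReal.ofReal (P i j) * vfun P H l n j) : ℝ≥0∞)
              : EReal) := by
        intro j
        split_ifs with hj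
        · simp
        · rw [coe_mul_eq_coe_ennreal _ _ (hP.1 i j) ENNReal.toReal_nonneg,
            ENNReal.ofReal_toReal (vfun_ne_top P H hrec l n j)]
      rw [tsum_congr hterm, ereal_tsum_coe, coe_toReal_ereal (vfun_ne_top P H hrec l n i),
        ← EReal.coe_ennreal_add]
      exact EReal.coe_ennreal_le_coe_ennreal_iff.mpr (vfun_subsol P H l n i)
    · -- the supremum is infinite
      rw [iSup_eq_top]
      intro b hb
      obtain ⟨M, hbM, -⟩ := EReal.exists_between_coe_real hb
      have hsup := vfun_sup_eq_top P H l hlerg h hzh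
      obtain ⟨n, hn⟩ := iSup_eq_top.mp hsup (ENNReal.ofReal (max M 0))
        ENNReal.ofReal_lt_top
      refine ⟨n, lt_of_lt_of_le ?_
        (le_iSup₂ (f := fun i _ => (((vfun P H l n i).toReal : ℝ) : EReal)) h hH)⟩
      have h2 : max M 0 < (vfun P H l n h).toReal :=
        (ENNReal.ofReal_lt_iff_lt_toReal (le_max_right M 0)
          (vfun_ne_top P H hrec l n h)).mp hn
      calc b < (M : EReal) := hbM
        _ ≤ ((max M 0 : ℝ) : EReal) := by exact_mod_cast le_max_left M 0
        _ < (((vfun P H l n h).toReal : ℝ) : EReal) := by exact_mod_cast h2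
  · -- converse direction
    rintro ⟨y, hy1, hy2⟩ hfin
    have hzfin : ∀ i, (∑' k, (QE P H)^[k] (dMoment P H l) i) ≠ ⊤ := fun i =>
      ne_top_of_le_ne_top (hfin i) (z_le_moment P H l i)
    have key : ∀ (n : ℕ) (i : E),
        ENNReal.ofReal (y n i) ≤ ∑' k, (QE P H)^[k] (dMoment P H l) i := by
      intro n i
      obtain ⟨c, hc⟩ := (hy1 n).1
      have hc' : ∀ j, y n j ≤ c := fun j => hc ⟨j, rfl⟩
      refine u_le_z P H hrec l (fun j => ENNReal.ofReal (y n j)) (ENNReal.ofReal c)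
        ENNReal.ofReal_ne_top (fun j => ENNReal.ofReal_le_ofReal (hc' j)) ?_ i
      intro i'
      show ENNReal.ofReal (y n i')
        ≤ QE P H (fun j => ENNReal.ofReal (y n j)) i' + dMoment P H l i'
      by_cases hyi : y n i' ≤ 0
      · rw [ENNReal.ofReal_eq_zero.mpr hyi]
        exact zero_le
      · refine ofReal_le_of_ereal_le ?_
        have h1 := (hy1 n).2 i'
        have h2 : (∑' j, (if j ∈ H then 0 else (P i' j : EReal) * (y n j : EReal)))
            ≤ ((QE P H (fun j => ENNReal.ofReal (y n j)) i' : ℝ≥0∞) : EReal) := by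
          refine ereal_tsum_le_coe _ _ fun j => ?_
          split_ifs with hj
          · simp
          · exact coe_mul_le_coe_ennreal _ _ (hP.1 i' j)
        calc ((y n i' : ℝ) : EReal)
            ≤ (∑' j, (if j ∈ H then 0 else (P i' j : EReal) * (y n j : EReal)))
              + (dMoment P H l i' : EReal) := h1
          _ ≤ ((QE P H (fun j => ENNReal.ofReal (y n j)) i' : ℝ≥0∞) : EReal)
              + (dMoment P H l i' : EReal) := add_le_add_left h2 _
          _ = (((QE P H (fun j => ENNReal.ofReal (y n j)) i'
              + dMoment P H l i') : ℝ≥0∞) : EReal) := (EReal.coe_ennreal_add _ _).symm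
    set M : ℝ≥0∞ :=
      hHfin.toFinset.sup (fun i => ∑' k, (QE P H)^[k] (dMoment P H l) i) with hM
    have hMne : M ≠ ⊤ := by
      refine ne_of_lt ?_
      refine (Finset.sup_lt_iff (by simp)).mpr fun i _ => ?_
      exact lt_top_iff_ne_top.mpr (hzfin i)
    have hbound : (⨆ n : ℕ, ⨆ i ∈ H, ((y n i : ℝ) : EReal)) ≤ (M : EReal) := by
      refine iSup_le fun n => iSup_le fun i => iSup_le fun hi => ?_
      calc ((y n i : ℝ) : EReal)
          ≤ ((ENNReal.ofReal (y n i) : ℝ≥0∞) : EReal) := by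
            rw [EReal.coe_ennreal_ofReal]
            exact le_max_left ((y n i : ℝ) : EReal) 0
        _ ≤ ((∑' k, (QE P H)^[k] (dMoment P H l) i : ℝ≥0∞) : EReal) :=
            EReal.coe_ennreal_le_coe_ennreal_iff.mpr (key n i)
        _ ≤ (M : EReal) := by
            rw [hM]
            exact EReal.coe_ennreal_le_coe_ennreal_iff.mpr
              (Finset.le_sup
                (f := fun i => ∑' k, (QE P H)^[k] (dMoment P H l) i)
                (hHfin.mem_toFinset.mpr hi))
    rw [hy2, ← EReal.coe_ennreal_top, EReal.coe_ennreal_le_coe_ennreal_iff,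
      top_le_iff] at hbound
    exact hMne hbound
end
end

section
/- Let P be an irreducible stochastic matrix on ℤ≥0. Then the chain is transient (i.e. not recurrent) if and only if there exists a function z : ℤ≥0 → ℝ such that Σ_{j≥0} P(i,j)·z(j) ≤ z(i) for every i ≥ 1 and −∞ < inf_{i≥0} z(i) < z(0). -/
open scoped ENNReal NNReal BigOperators Classical Topology
open Filter Set

noncomputable section

section Aux
variable (P : ℕ → ℕ → ℝ)

lemma tsum_split0 (f : ℕ → ℝ≥0∞) : ∑' j, f j = f 0 + ∑' j, if j = 0 then 0 else f j := by
  have h : ∀ j, f j = (if j = 0 then f 0 else 0) + (if j = 0 then 0 else f j) := by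
    intro j; by_cases hj : j = 0 <;> simp [hj]
  rw [tsum_congr h, ENNReal.tsum_add, tsum_ite_eq]

def realToEReal : ℝ →+ EReal := ⟨⟨Real.toEReal, EReal.coe_zero⟩, EReal.coe_add⟩

lemma sd_zero (i : ℕ) : sigmaDist P {0} 0 i = ENNReal.ofReal (P i 0) := by
  simp only [sigmaDist, Set.mem_singleton_iff]
  rw [tsum_eq_single 0]
  · simp
  · intro b hb; simp [hb]

lemma sd_succ (n i : ℕ) : sigmaDist P {0} (n+1) i
    = ∑' j : ℕ, if j = 0 then 0 else ENNReal.ofReal (P i j) * sigmaDist P {0} n j := by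
  simp only [sigmaDist, Set.mem_singleton_iff]

lemma row_one (hP : IsStochastic P) (i : ℕ) : ∑' j : ℕ, ENNReal.ofReal (P i j) = 1 := by
  rw [← ENNReal.ofReal_tsum_of_nonneg (hP.1 i) (hP.2 i).summable, (hP.2 i).tsum_eq,
    ENNReal.ofReal_one]

/-- partial sums of sigmaDist -/
def sdS (N i : ℕ) : ℝ≥0∞ := ∑ n ∈ Finset.range N, sigmaDist P {0} n i

lemma sdS_succ (N i : ℕ) : sdS P (N+1) i
    = ENNReal.ofReal (P i 0) + ∑' j : ℕ, if j = 0 then 0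
        else ENNReal.ofReal (P i j) * sdS P N j := by
  unfold sdS
  rw [Finset.sum_range_succ']
  have h1 : ∑ n ∈ Finset.range N, sigmaDist P {0} (n+1) i
      = ∑' j : ℕ, if j = 0 then 0 else ENNReal.ofReal (P i j)
          * ∑ n ∈ Finset.range N, sigmaDist P {0} n j := by
    calc ∑ n ∈ Finset.range N, sigmaDist P {0} (n+1) i
        = ∑ n ∈ Finset.range N, ∑' j : ℕ, (if j = 0 then 0
            else ENNReal.ofReal (P i j) * sigmaDist P {0} n j) := by
          refine Finset.sum_congr rfl fun n _ => sd_succ P n i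
      _ = ∑' j : ℕ, ∑ n ∈ Finset.range N, (if j = 0 then 0
            else ENNReal.ofReal (P i j) * sigmaDist P {0} n j) := by
          rw [Summable.tsum_finsetSum]; intro n _; exact ENNReal.summable
      _ = _ := by
          refine tsum_congr fun j => ?_
          by_cases hj : j = 0
          · simp [hj]
          · simp only [hj, if_false, Finset.mul_sum]
  rw [h1, sd_zero P, add_comm]

lemma sdS_le_one (hP : IsStochastic P) : ∀ N i, sdS P N i ≤ 1 := by
  intro N
  induction N with
  | zero => intro i; simp [sdS]
  | succ N ih =>
    intro i
    rw [sdS_succ]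
    calc ENNReal.ofReal (P i 0) + ∑' j : ℕ, (if j = 0 then 0
          else ENNReal.ofReal (P i j) * sdS P N j)
        ≤ ENNReal.ofReal (P i 0) + ∑' j : ℕ, (if j = 0 then 0 else ENNReal.ofReal (P i j)) := by
          refine add_le_add le_rfl (ENNReal.tsum_le_tsum fun j => ?_)
          by_cases hj : j = 0
          · simp [hj]
          · simp only [hj, if_false]
            calc ENNReal.ofReal (P i j) * sdS P N j ≤ ENNReal.ofReal (P i j) * 1 :=
                  mul_le_mul_right (ih j) _
              _ = _ := mul_one _
      _ = ∑' j : ℕ, ENNReal.ofReal (P i j) := (tsum_split0 (fun j => ENNReal.ofReal (P i j))).symm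
      _ = 1 := row_one P hP i

lemma hfun_eq_iSup (i : ℕ) : (∑' n, sigmaDist P {0} n i) = ⨆ N, sdS P N i :=
  ENNReal.tsum_eq_iSup_nat

lemma hfun_rec (i : ℕ) : (∑' n, sigmaDist P {0} n i)
    = ENNReal.ofReal (P i 0) + ∑' j : ℕ, if j = 0 then 0
        else ENNReal.ofReal (P i j) * ∑' n, sigmaDist P {0} n j := by
  rw [tsum_eq_zero_add' ENNReal.summable, sd_zero P]
  congr 1
  calc (∑' n, sigmaDist P {0} (n+1) i)
      = ∑' n, ∑' j : ℕ, (if j = 0 then 0 else ENNReal.ofReal (P i j) * sigmaDist P {0} n j) :=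
        tsum_congr fun n => sd_succ P n i
    _ = ∑' j : ℕ, ∑' n, (if j = 0 then 0 else ENNReal.ofReal (P i j) * sigmaDist P {0} n j) :=
        ENNReal.tsum_comm
    _ = _ := by
        refine tsum_congr fun j => ?_
        by_cases hj : j = 0
        · simp [hj]
        · simp only [hj, if_false, ENNReal.tsum_mul_left]

lemma hfun_le_one (hP : IsStochastic P) (i : ℕ) : (∑' n, sigmaDist P {0} n i) ≤ 1 := by
  rw [hfun_eq_iSup]
  exact iSup_le fun N => sdS_le_one P hP N i

end Aux

/-- Transience criterion for a discrete-time Markov chain on ℤ≥0. -/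
theorem transient_iff_test_function (P : ℕ → ℕ → ℝ)
    (hP : IsStochastic P) (hirr : MatIrreducible P) :
    ¬ DRecurrent P {0} ↔
      ∃ z : ℕ → ℝ,
        (∀ i : ℕ, 1 ≤ i →
          (∑' j : ℕ, (P i j : EReal) * (z j : EReal)) ≤ (z i : EReal)) ∧
        ⊥ < ⨅ i, (z i : EReal) ∧ (⨅ i, (z i : EReal)) < (z 0 : EReal) := by
  classical
  constructor
  · -- transient → test function
    intro hnr
    set h : ℕ → ℝ≥0∞ := fun i => ∑' n, sigmaDist P {0} n i with hh
    have hle : ∀ i, h i ≤ 1 := fun i => hfun_le_one P hP i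
    have hrec : ∀ i, h i = ENNReal.ofReal (P i 0) +
        ∑' j : ℕ, if j = 0 then 0 else ENNReal.ofReal (P i j) * h j :=
      fun i => hfun_rec P i
    set Z : ℕ → ℝ≥0∞ := fun j => if j = 0 then 1 else h j with hZ
    have hZle : ∀ j, Z j ≤ 1 := by
      intro j; by_cases hj : j = 0 <;> simp [hZ, hj, hle j]
    have hZne : ∀ j, Z j ≠ ⊤ := fun j => ((hZle j).trans_lt ENNReal.one_lt_top).ne
    have hrec2 : ∀ i, (∑' j : ℕ, ENNReal.ofReal (P i j) * Z j) = h i := by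
      intro i
      rw [tsum_split0 (fun j => ENNReal.ofReal (P i j) * Z j), hrec i]
      congr 1
      · simp [hZ]
      · refine tsum_congr fun j => ?_
        by_cases hj : j = 0 <;> simp [hZ, hj]
    have hex : ∃ j0 : ℕ, j0 ≠ 0 ∧ h j0 < 1 := by
      by_contra hcon
      push_neg at hcon
      have hall : ∀ j, Z j = 1 := by
        intro j; by_cases hj : j = 0
        · simp [hZ, hj]
        · have h1 := hcon j hj
          simp only [hZ, hj, if_false]
          exact le_antisymm (hle j) h1
      refine hnr fun i => ?_
      have : h i = 1 := by
        rw [← hrec2 i]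
        simp only [hall, mul_one]
        exact row_one P hP i
      exact this
    obtain ⟨j0, hj0, hj0lt⟩ := hex
    refine ⟨fun j => (Z j).toReal, ?_, ?_, ?_⟩
    · intro i hi
      have hine : i ≠ 0 := Nat.one_le_iff_ne_zero.mp hi
      have hne : (∑' j : ℕ, ENNReal.ofReal (P i j) * Z j) ≠ ⊤ := by
        rw [hrec2 i]; exact ((hle i).trans_lt ENNReal.one_lt_top).ne
      have hterm_ne : ∀ j, ENNReal.ofReal (P i j) * Z j ≠ ⊤ :=
        fun j => ENNReal.mul_ne_top ENNReal.ofReal_ne_top (hZne j)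
      have hreal : ∑' j : ℕ, (P i j * (Z j).toReal) = (h i).toReal := by
        rw [← hrec2 i, ENNReal.tsum_toReal_eq hterm_ne]
        refine tsum_congr fun j => ?_
        rw [ENNReal.toReal_mul, ENNReal.toReal_ofReal (hP.1 i j)]
      have hsum : Summable (fun j : ℕ => P i j * (Z j).toReal) := by
        refine (ENNReal.summable_toReal hne).congr fun j => ?_
        rw [ENNReal.toReal_mul, ENNReal.toReal_ofReal (hP.1 i j)]
      have hhs : HasSum (fun j : ℕ => P i j * (Z j).toReal) ((h i).toReal) :=
        hreal ▸ hsum.hasSum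
      have hE : HasSum (fun j : ℕ => ((P i j * (Z j).toReal : ℝ) : EReal))
          (((h i).toReal : ℝ) : EReal) := hhs.map realToEReal continuous_coe_real_ereal
      have : (∑' j : ℕ, (P i j : EReal) * (((Z j).toReal : ℝ) : EReal))
          = (((h i).toReal : ℝ) : EReal) := by
        rw [← hE.tsum_eq]
        exact tsum_congr fun j => (EReal.coe_mul _ _).symm
      rw [this]
      show ((h i).toReal : EReal) ≤ ((Z i).toReal : EReal)
      have : (Z i).toReal = (h i).toReal := by simp [hZ, hine]
      rw [this]
    · have h0 : ∀ i, ((0 : ℝ) : EReal) ≤ (((Z i).toReal : ℝ) : EReal) :=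
        fun i => EReal.coe_le_coe_iff.mpr ENNReal.toReal_nonneg
      exact lt_of_lt_of_le (EReal.bot_lt_coe 0) (le_iInf h0)
    · have h1 : (⨅ i, (((Z i).toReal : ℝ) : EReal)) ≤ (((Z j0).toReal : ℝ) : EReal) :=
        iInf_le _ j0
      refine lt_of_le_of_lt h1 ?_
      show (((Z j0).toReal : ℝ) : EReal) < (((Z 0).toReal : ℝ) : EReal)
      have hz0 : (Z 0) = 1 := by simp [hZ]
      have hzj : (Z j0) = h j0 := by simp [hZ, hj0]
      have hfin : h j0 ≠ ⊤ := ((hle j0).trans_lt ENNReal.one_lt_top).ne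
      have : (Z j0).toReal < (Z 0).toReal := by
        rw [hz0, hzj]
        exact (ENNReal.toReal_lt_toReal hfin ENNReal.one_ne_top).mpr hj0lt
      exact_mod_cast this
  · -- test function → transient
    rintro ⟨z, hsup, hbot, hlt⟩ hd
    set I : EReal := ⨅ i, (z i : EReal) with hI
    have hItop : I ≠ ⊤ := hlt.ne_top
    have hIbot : I ≠ ⊥ := hbot.ne'
    set c : ℝ := I.toReal with hc
    have hcI : (c : EReal) = I := EReal.coe_toReal hItop hIbot
    have hcz : ∀ i, c ≤ z i := by
      intro i
      have := iInf_le (fun i => ((z i : ℝ) : EReal)) i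
      rw [← hI, ← hcI] at this
      exact_mod_cast this
    have hc0 : c < z 0 := by
      have := hlt
      rw [← hcI] at this
      exact_mod_cast this
    set W : ℕ → ℝ≥0∞ := fun i => ENNReal.ofReal (z i - c) with hW
    -- superharmonicity in ℝ≥0∞
    have hSH : ∀ i, i ≠ 0 → (∑' j : ℕ, ENNReal.ofReal (P i j) * W j) ≤ W i := by
      intro i hi0
      have hsupi := hsup i (Nat.one_le_iff_ne_zero.mpr hi0)
      set s : ℕ → ℝ := fun j => P i j * (z j - c) with hs
      have hs0 : ∀ j, 0 ≤ s j := fun j => mul_nonneg (hP.1 i j) (sub_nonneg.2 (hcz j))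
      have hsum : Summable s := by
        by_contra hns
        have hts : HasSum (fun j : ℕ => (P i j : EReal) * (z j : EReal)) ⊤ := by
          have hfun : ∀ j : ℕ, (P i j : EReal) * (z j : EReal)
              = ((s j + c * P i j : ℝ) : EReal) := by
            intro j; rw [← EReal.coe_mul]; congr 1; simp only [hs]; ring
          have hPsum : ∀ F : Finset ℕ, ∑ j ∈ F, P i j ≤ 1 :=
            fun F => sum_le_hasSum F (fun j _ => hP.1 i j) (hP.2 i)
          have hPnn : ∀ F : Finset ℕ, 0 ≤ ∑ j ∈ F, P i j :=
            fun F => Finset.sum_nonneg fun j _ => hP.1 i j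
          rw [show (fun j : ℕ => (P i j : EReal) * (z j : EReal))
              = fun j => ((s j + c * P i j : ℝ) : EReal) from funext hfun]
          rw [HasSum]
          rw [EReal.tendsto_nhds_top_iff_real]
          intro x
          have hex : ∃ F0 : Finset ℕ, x + |c| < ∑ j ∈ F0, s j := by
            by_contra hcon
            push_neg at hcon
            exact hns (summable_of_sum_le hs0 hcon)
          obtain ⟨F0, hF0⟩ := hex
          filter_upwards [Filter.eventually_ge_atTop F0] with F hF
          have hsum_eq : ∑ j ∈ F, ((s j + c * P i j : ℝ) : EReal)
              = ((∑ j ∈ F, (s j + c * P i j) : ℝ) : EReal) :=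
            (map_sum realToEReal _ F).symm
          rw [hsum_eq, EReal.coe_lt_coe_iff]
          have h1 : ∑ j ∈ F0, s j ≤ ∑ j ∈ F, s j :=
            Finset.sum_le_sum_of_subset_of_nonneg hF fun j _ _ => hs0 j
          have h2 : -|c| ≤ c * ∑ j ∈ F, P i j := by
            have habs : |c * ∑ j ∈ F, P i j| ≤ |c| := by
              rw [abs_mul, abs_of_nonneg (hPnn F)]
              calc |c| * ∑ j ∈ F, P i j ≤ |c| * 1 :=
                    mul_le_mul_of_nonneg_left (hPsum F) (abs_nonneg c)
                _ = |c| := mul_one _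
            linarith [neg_abs_le (c * ∑ j ∈ F, P i j), abs_le.mp habs]
          rw [Finset.sum_add_distrib, ← Finset.mul_sum]
          linarith
        rw [hts.tsum_eq] at hsupi
        exact absurd hsupi (EReal.coe_lt_top (z i)).not_ge
      -- summable case
      have hts : HasSum (fun j : ℕ => P i j * z j) ((∑' j, s j) + c) := by
        have h1 : HasSum (fun j : ℕ => s j + c * P i j) ((∑' j, s j) + c * 1) :=
          hsum.hasSum.add ((hP.2 i).mul_left c)
        rw [mul_one] at h1
        have hfe : (fun j : ℕ => s j + c * P i j) = fun j : ℕ => P i j * z j := by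
          funext j; simp only [hs]; ring
        rwa [hfe] at h1
      have htsE : HasSum (fun j : ℕ => ((P i j * z j : ℝ) : EReal))
          (((∑' j, s j) + c : ℝ) : EReal) := hts.map realToEReal continuous_coe_real_ereal
      have hEeq : (∑' j : ℕ, (P i j : EReal) * (z j : EReal))
          = (((∑' j, s j) + c : ℝ) : EReal) := by
        rw [← htsE.tsum_eq]
        exact tsum_congr fun j => (EReal.coe_mul _ _).symm
      rw [hEeq] at hsupi
      have hSle : (∑' j, s j) ≤ z i - c := by
        have := EReal.coe_le_coe_iff.mp hsupi
        linarith
      calc (∑' j : ℕ, ENNReal.ofReal (P i j) * W j)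
          = ∑' j : ℕ, ENNReal.ofReal (s j) := by
            refine tsum_congr fun j => ?_
            rw [hW]
            exact (ENNReal.ofReal_mul (hP.1 i j)).symm
        _ = ENNReal.ofReal (∑' j, s j) := (ENNReal.ofReal_tsum_of_nonneg hs0 hsum).symm
        _ ≤ ENNReal.ofReal (z i - c) := ENNReal.ofReal_le_ofReal hSle
        _ = W i := rfl
    -- iterate: sdS N i * W 0 ≤ W i
    have key : ∀ N : ℕ, ∀ i, i ≠ 0 → sdS P N i * W 0 ≤ W i := by
      intro N
      induction N with
      | zero => intro i _; simp [sdS]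
      | succ N ih =>
        intro i hi0
        rw [sdS_succ, add_mul, ← ENNReal.tsum_mul_right]
        calc ENNReal.ofReal (P i 0) * W 0 +
              ∑' j : ℕ, (if j = 0 then 0 else ENNReal.ofReal (P i j) * sdS P N j) * W 0
            ≤ ENNReal.ofReal (P i 0) * W 0 +
              ∑' j : ℕ, (if j = 0 then 0 else ENNReal.ofReal (P i j) * W j) := by
              refine add_le_add le_rfl (ENNReal.tsum_le_tsum fun j => ?_)
              by_cases hj : j = 0
              · simp [hj]
              · simp only [hj, if_false]
                rw [mul_assoc]
                exact mul_le_mul_right (ih j hj) _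
          _ = ∑' j : ℕ, ENNReal.ofReal (P i j) * W j :=
              (tsum_split0 (fun j => ENNReal.ofReal (P i j) * W j)).symm
          _ ≤ W i := hSH i hi0
    have hW0le : ∀ i, W 0 ≤ W i := by
      intro i
      by_cases hi0 : i = 0
      · rw [hi0]
      · have h1 : (∑' n, sigmaDist P {0} n i) * W 0 ≤ W i := by
          rw [hfun_eq_iSup, ENNReal.iSup_mul]
          exact iSup_le fun N => key N i hi0
        rw [hd i, one_mul] at h1
        exact h1
    have hz0le : ∀ i, z 0 ≤ z i := by
      intro i
      have h1 := hW0le i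
      rw [hW] at h1
      have := (ENNReal.ofReal_le_ofReal_iff (sub_nonneg.2 (hcz i))).mp h1
      linarith
    have : (z 0 : EReal) ≤ I := by
      rw [hI]
      exact le_iInf fun i => EReal.coe_le_coe_iff.mpr (hz0le i)
    exact absurd hlt this.not_gt
end
end
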